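/- arXiv:1011.3615 — 2 statements merged into one kernel-verified Lean document; each statement's English description precedes it below -/
import Mathlib

section
/- Let α, β ≥ -1/2 and let M, N ≥ 0 be integers. There exists a constant C = C(α,β,M,N) such that for all θ, φ ∈ (0,π), all u, v ∈ [-1,1] and all t > 0, writing ∂_θ^N ∂_t^M Φ for the N-th partial derivative in θ of the M-th partial derivative in t of Φ(t,θ) = sinh(t/2) · (cosh(t/2) - 1 + q(θ,φ,u,v))^{-(α+β+2)}, and abbreviating Q = cosh(t/2) - 1 + q(θ,φ,u,v), one has: (i) if 0 < t ≤ 1 then |∂_θ^N ∂_t^M Φ| ≤ C · Q^{-(α+β+3/2+(M+N)/2)}; (ii) if t > 1 and N ≥ 1 then |∂_θ^N ∂_t^M Φ| ≤ C · Q^{-(α+β+3/2)}; (iii) if t > 1 and N = 0 then |∂_t^M Φ| ≤ C · Q^{-(α+β+1)}; (iv) if t > 1, N = 0, M ≥ 1 and α+β = -1 then |∂_t^M Φ| ≤ C · Q^{-1}. -/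
open Real MeasureTheory Set
open scoped ENNReal

noncomputable def jacobiDensity (α β : ℝ) (x : ℝ) : ℝ :=
  Real.sin (x / 2) ^ (2 * α + 1) * Real.cos (x / 2) ^ (2 * β + 1)

noncomputable def mJacobi (α β : ℝ) : Measure ℝ :=
  (volume.restrict (Ioo 0 π)).withDensity fun x => ENNReal.ofReal (jacobiDensity α β x)

noncomputable def mBall (α β θ r : ℝ) : ℝ :=
  (mJacobi α β (Ioo (θ - r) (θ + r))).toReal

noncomputable def qK (θ φ u v : ℝ) : ℝ :=
  1 - u * (Real.sin (θ / 2) * Real.sin (φ / 2)) - v * (Real.cos (θ / 2) * Real.cos (φ / 2))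

noncomputable def PiMeas (γ : ℝ) : Measure ℝ :=
  if γ = -(1/2) then (2 : ℝ≥0∞)⁻¹ • (Measure.dirac (-1) + Measure.dirac 1)
  else (volume.restrict (Icc (-1 : ℝ) 1)).withDensity fun u =>
    ENNReal.ofReal (Real.Gamma (γ + 1) / (Real.sqrt π * Real.Gamma (γ + 1/2)) * (1 - u ^ 2) ^ (γ - 1/2))

noncomputable def cJ (α β : ℝ) : ℝ :=
  (2 : ℝ) ^ (-(α + β + 1)) / (mJacobi α β (Ioo 0 π)).toReal

noncomputable def HJ (α β t θ φ : ℝ) : ℝ :=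
  cJ α β * Real.sinh (t / 2) *
    ∫ u, ∫ v, (Real.cosh (t / 2) - 1 + qK θ φ u v) ^ (-(α + β + 2)) ∂PiMeas β ∂PiMeas α

/-- `∂_θ^N ∂_t^M Φ` where `Φ(t,θ) = sinh(t/2)·(cosh(t/2) - 1 + q(θ,φ,u,v))^{-(α+β+2)}`. -/
noncomputable def PhiDer (α β : ℝ) (M N : ℕ) (t θ φ u v : ℝ) : ℝ :=
  iteratedDeriv N (fun x => iteratedDeriv M
    (fun s => Real.sinh (s / 2) * (Real.cosh (s / 2) - 1 + qK x φ u v) ^ (-(α + β + 2))) t) θ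


set_option maxHeartbeats 1000000

namespace St17

open Filter Topology

/-! ### rpow helpers -/

lemma rpow_le_rpow_nonpos {b x e : ℝ} (hb : 0 < b) (hbx : b ≤ x) (he : e ≤ 0) :
    x ^ e ≤ b ^ e := by
  have hx : 0 < x := lt_of_lt_of_le hb hbx
  have h1 : b ^ (-e) ≤ x ^ (-e) := Real.rpow_le_rpow hb.le hbx (by linarith)
  have hbp : 0 < b ^ (-e) := Real.rpow_pos_of_pos hb _
  rw [show e = -(-e) by ring, Real.rpow_neg hx.le, Real.rpow_neg hb.le]
  exact inv_anti₀ hbp h1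

lemma key_hi {Q B e tgt : ℝ} (hQ : 0 < Q) (hQB : Q ≤ B) (hB : 1 ≤ B) (n : ℕ)
    (h1 : tgt ≤ e) (h2 : e - tgt ≤ n) : Q ^ e ≤ B ^ n * Q ^ tgt := by
  have h3 : Q ^ e = Q ^ (e - tgt) * Q ^ tgt := by
    rw [← Real.rpow_add hQ]; ring_nf
  rw [h3]
  refine mul_le_mul_of_nonneg_right ?_ (Real.rpow_pos_of_pos hQ tgt).le
  have h4 : Q ^ (e - tgt) ≤ B ^ (e - tgt) := Real.rpow_le_rpow hQ.le hQB (by linarith)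
  have h5 : B ^ (e - tgt) ≤ B ^ ((n : ℝ)) := Real.rpow_le_rpow_of_exponent_le hB h2
  calc Q ^ (e - tgt) ≤ B ^ ((n:ℝ)) := h4.trans h5
  _ = B ^ n := Real.rpow_natCast B n

lemma key_lo {Q b e tgt : ℝ} (hb : 0 < b) (hbQ : b ≤ Q) (hb1 : b ≤ 1) (n : ℕ)
    (h1 : e ≤ tgt) (h2 : tgt - e ≤ n) : Q ^ e ≤ b⁻¹ ^ n * Q ^ tgt := by
  have hQ : 0 < Q := lt_of_lt_of_le hb hbQ
  have h3 : Q ^ e = Q ^ (e - tgt) * Q ^ tgt := by rw [← Real.rpow_add hQ]; ring_nf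
  rw [h3]
  refine mul_le_mul_of_nonneg_right ?_ (Real.rpow_pos_of_pos hQ tgt).le
  have h4 : Q ^ (e - tgt) ≤ b ^ (e - tgt) := rpow_le_rpow_nonpos hb hbQ (by linarith)
  have h5 : b ^ (e - tgt) = b⁻¹ ^ (tgt - e) := by
    rw [Real.inv_rpow hb.le, ← Real.rpow_neg hb.le]
    ring_nf
  have h1b : (1:ℝ) ≤ b⁻¹ := by
    have := inv_anti₀ hb hb1
    simpa using this
  have h6 : b⁻¹ ^ (tgt - e) ≤ b⁻¹ ^ ((n:ℝ)) := Real.rpow_le_rpow_of_exponent_le h1b h2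
  calc Q ^ (e - tgt) ≤ b⁻¹ ^ ((n:ℝ)) := (h4.trans_eq h5).trans h6
  _ = b⁻¹ ^ n := Real.rpow_natCast _ n

lemma sqrt_pow_eq {Q : ℝ} (hQ : 0 ≤ Q) (n : ℕ) : Real.sqrt Q ^ n = Q ^ ((n : ℝ)/2) := by
  rw [Real.sqrt_eq_rpow, ← Real.rpow_natCast (Q ^ ((1:ℝ)/2)) n, ← Real.rpow_mul hQ]
  congr 1; ring

lemma abs_pow_le_sqrt {x K Q : ℝ} (hQ : 0 ≤ Q) (hK : 0 ≤ K) (h : |x| ≤ K * Real.sqrt Q) (n : ℕ) :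
    |x| ^ n ≤ K ^ n * Q ^ ((n : ℝ)/2) := by
  have h1 : |x| ^ n ≤ (K * Real.sqrt Q) ^ n := pow_le_pow_left₀ (abs_nonneg x) h n
  rw [mul_pow, sqrt_pow_eq hQ] at h1
  exact h1

lemma list_sum_bound {T : Type*} (L : List T) (f g : T → ℝ) (E : ℝ) (hE : 0 ≤ E)
    (h : ∀ a ∈ L, |f a| ≤ g a * E) :
    |(L.map f).sum| ≤ (L.map g).sum * E := by
  induction L with
  | nil => simp
  | cons a L ih =>
    simp only [List.map_cons, List.sum_cons]
    have h1 := h a (by simp)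
    have h2 := ih (fun b hb => h b (by simp [hb]))
    calc |f a + (L.map f).sum| ≤ |f a| + |(L.map f).sum| := abs_add_le _ _
    _ ≤ g a * E + (L.map g).sum * E := by linarith
    _ = (g a + (L.map g).sum) * E := by ring

lemma list_sum_nonneg' {T : Type*} (L : List T) (g : T → ℝ) (h : ∀ a ∈ L, 0 ≤ g a) :
    0 ≤ (L.map g).sum := by
  apply List.sum_nonneg
  intro x hx
  obtain ⟨a, ha, rfl⟩ := List.mem_map.1 hx
  exact h a ha

lemma le_sqrt_of_sq_le {A K q : ℝ} (hA : 0 ≤ A) (hK : 0 ≤ K) (hq : 0 ≤ q)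
    (h : A^2 ≤ K^2 * q) : A ≤ K * Real.sqrt q := by
  have h1 := Real.sqrt_le_sqrt h
  rw [Real.sqrt_sq hA] at h1
  rwa [Real.sqrt_mul (by positivity) q, Real.sqrt_sq hK] at h1

/-! ### numeric bounds -/

lemma exp_half_lb : (1.64:ℝ) ≤ Real.exp (1/2) := by
  have h2 : Real.exp (1/2) * Real.exp (1/2) = Real.exp 1 := by
    rw [← Real.exp_add]; norm_num
  nlinarith [Real.exp_pos (1/2:ℝ), Real.exp_one_gt_d9]

lemma exp_half_ub : Real.exp (1/2) ≤ (1.649:ℝ) := by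
  have h2 : Real.exp (1/2) * Real.exp (1/2) = Real.exp 1 := by
    rw [← Real.exp_add]; norm_num
  nlinarith [Real.exp_pos (1/2:ℝ), Real.exp_one_lt_d9]

lemma cosh_half_lb : (10/9:ℝ) ≤ Real.cosh (1/2) := by
  have h0 := Real.exp_pos (1/2:ℝ)
  have hlb := exp_half_lb; have hub := exp_half_ub
  have hneg : Real.exp (-(1/2:ℝ)) = (Real.exp (1/2))⁻¹ := Real.exp_neg _
  have hinv : Real.exp (1/2:ℝ) * (Real.exp (1/2))⁻¹ = 1 := mul_inv_cancel₀ h0.ne'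
  rw [Real.cosh_eq, hneg]
  nlinarith [inv_nonneg.2 h0.le]

lemma cosh_half_ub : Real.cosh (1/2) ≤ 2 := by
  have h0 := Real.exp_pos (1/2:ℝ)
  have hlb := exp_half_lb; have hub := exp_half_ub
  have hneg : Real.exp (-(1/2:ℝ)) = (Real.exp (1/2))⁻¹ := Real.exp_neg _
  have hinv : Real.exp (1/2:ℝ) * (Real.exp (1/2))⁻¹ = 1 := mul_inv_cancel₀ h0.ne'
  rw [Real.cosh_eq, hneg]
  nlinarith [inv_nonneg.2 h0.le]

/-! ### qK basics -/

lemma qK_nonneg {u v : ℝ} (hu : u ∈ Icc (-1:ℝ) 1) (hv : v ∈ Icc (-1:ℝ) 1) (x φ : ℝ) :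
    0 ≤ qK x φ u v := by
  obtain ⟨hu1, hu2⟩ := hu; obtain ⟨hv1, hv2⟩ := hv
  have p1 := Real.sin_sq_add_cos_sq (x/2)
  have p2 := Real.sin_sq_add_cos_sq (φ/2)
  unfold qK
  nlinarith [mul_nonneg (by linarith : (0:ℝ) ≤ 1 - u) (sq_nonneg (Real.sin (x/2) + Real.sin (φ/2))),
    mul_nonneg (by linarith : (0:ℝ) ≤ 1 + u) (sq_nonneg (Real.sin (x/2) - Real.sin (φ/2))),
    mul_nonneg (by linarith : (0:ℝ) ≤ 1 - v) (sq_nonneg (Real.cos (x/2) + Real.cos (φ/2))),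
    mul_nonneg (by linarith : (0:ℝ) ≤ 1 + v) (sq_nonneg (Real.cos (x/2) - Real.cos (φ/2)))]

lemma qK_le_two {u v : ℝ} (hu : u ∈ Icc (-1:ℝ) 1) (hv : v ∈ Icc (-1:ℝ) 1) (x φ : ℝ) :
    qK x φ u v ≤ 2 := by
  obtain ⟨hu1, hu2⟩ := hu; obtain ⟨hv1, hv2⟩ := hv
  have p1 := Real.sin_sq_add_cos_sq (x/2)
  have p2 := Real.sin_sq_add_cos_sq (φ/2)
  unfold qK
  nlinarith [mul_nonneg (by linarith : (0:ℝ) ≤ 1 + u) (sq_nonneg (Real.sin (x/2) + Real.sin (φ/2))),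
    mul_nonneg (by linarith : (0:ℝ) ≤ 1 - u) (sq_nonneg (Real.sin (x/2) - Real.sin (φ/2))),
    mul_nonneg (by linarith : (0:ℝ) ≤ 1 + v) (sq_nonneg (Real.cos (x/2) + Real.cos (φ/2))),
    mul_nonneg (by linarith : (0:ℝ) ≤ 1 - v) (sq_nonneg (Real.cos (x/2) - Real.cos (φ/2)))]

noncomputable def qd (φ u v x : ℝ) : ℝ :=
  (v * (Real.sin (x/2) * Real.cos (φ/2)) - u * (Real.cos (x/2) * Real.sin (φ/2))) / 2


lemma qd_le_sqrt_aux {s1 c1 s2 c2 D q u v : ℝ}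
    (hs1p : 0 < s1) (hc1p : 0 < c1) (hs2p : 0 < s2) (hc2p : 0 < c2)
    (hs1le : s1 ≤ 1) (hc1le : c1 ≤ 1) (hs2le : s2 ≤ 1) (hc2le : c2 ≤ 1)
    (hu1 : -1 ≤ u) (hu2 : u ≤ 1) (hv1 : -1 ≤ v) (hv2 : v ≤ 1)
    (hq : q = (1-u)*(s1*s2) + (1-v)*(c1*c2) + 2*D^2)
    (hc12 : |c1 - c2| ≤ 2*|D|) (hs12 : |s1 - s2| ≤ 2*|D|)
    (hS : |s1*c2 - c1*s2| ≤ 2*|D|) :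
    |(v * (s1 * c2) - u * (c1 * s2)) / 2| ≤ 7 * Real.sqrt q := by
  have t1 : 0 ≤ (1-u)*(s1*s2) := mul_nonneg (by linarith) (mul_nonneg hs1p.le hs2p.le)
  have t2 : 0 ≤ (1-v)*(c1*c2) := mul_nonneg (by linarith) (mul_nonneg hc1p.le hc2p.le)
  have hq0 : 0 ≤ q := by nlinarith [sq_nonneg D]
  have hD2q : 2*D^2 ≤ q := by nlinarith
  have hDle : |D| ≤ Real.sqrt q := by
    rw [← Real.sqrt_sq_eq_abs]
    exact Real.sqrt_le_sqrt (by nlinarith [sq_nonneg D])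
  -- bound A := (1-v)*(s1*c2)
  have hA0 : 0 ≤ (1-v)*(s1*c2) := mul_nonneg (by linarith) (mul_nonneg hs1p.le hc2p.le)
  have hA : (1-v)*(s1*c2) ≤ 6 * Real.sqrt q := by
    apply le_sqrt_of_sq_le hA0 (by norm_num) hq0
    have hvq : (1-v)*(c1*c2) ≤ q := by nlinarith [sq_nonneg D]
    have hs1sq : s1^2 ≤ 1 := by nlinarith
    have e2 : ((1-v)*(s1*c2))^2 ≤ (1-v)^2*c2^2 := by
      nlinarith [mul_nonneg (sq_nonneg ((1-v)*c2)) (by linarith : (0:ℝ) ≤ 1 - s1^2)]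
    rcases le_or_gt c2 (2*c1) with hcc | hcc
    · have k1 : c2^2 ≤ 2*(c1*c2) := by nlinarith
      have e3 : (1-v)^2*c2^2 ≤ 2*((1-v)*c2^2) := by
        nlinarith [mul_nonneg (mul_nonneg (by linarith : (0:ℝ) ≤ 1-v)
          (by linarith : (0:ℝ) ≤ 1+v)) (sq_nonneg c2)]
      have e4 : (1-v)*c2^2 ≤ (1-v)*(2*(c1*c2)) :=
        mul_le_mul_of_nonneg_left k1 (by linarith)
      nlinarith [e2, e3, e4, hvq, hq0]
    · have k2 : c2 ≤ 4*|D| := by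
        have h4 : |c1 - c2| = c2 - c1 := by rw [abs_sub_comm]; exact abs_of_nonneg (by linarith)
        have h3 : c2 - c1 ≤ 2*|D| := h4 ▸ hc12
        linarith
      have k3 : c2^2 ≤ 16*D^2 := by
        nlinarith [k2, abs_nonneg D, hc2p.le, sq_abs D]
      have e4 : (1-v)^2*c2^2 ≤ 4*c2^2 := by
        nlinarith [mul_nonneg (mul_nonneg (by linarith : (0:ℝ) ≤ 1+v)
          (by linarith : (0:ℝ) ≤ 3-v)) (sq_nonneg c2)]
      nlinarith [e2, e4, k3, hD2q]
  -- bound B := (1-u)*(c1*s2)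
  have hB0 : 0 ≤ (1-u)*(c1*s2) := mul_nonneg (by linarith) (mul_nonneg hc1p.le hs2p.le)
  have hB : (1-u)*(c1*s2) ≤ 6 * Real.sqrt q := by
    apply le_sqrt_of_sq_le hB0 (by norm_num) hq0
    have huq : (1-u)*(s1*s2) ≤ q := by nlinarith [sq_nonneg D]
    have hc1sq : c1^2 ≤ 1 := by nlinarith
    have e2 : ((1-u)*(c1*s2))^2 ≤ (1-u)^2*s2^2 := by
      nlinarith [mul_nonneg (sq_nonneg ((1-u)*s2)) (by linarith : (0:ℝ) ≤ 1 - c1^2)]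
    rcases le_or_gt s2 (2*s1) with hss | hss
    · have k1 : s2^2 ≤ 2*(s1*s2) := by nlinarith
      have e3 : (1-u)^2*s2^2 ≤ 2*((1-u)*s2^2) := by
        nlinarith [mul_nonneg (mul_nonneg (by linarith : (0:ℝ) ≤ 1-u)
          (by linarith : (0:ℝ) ≤ 1+u)) (sq_nonneg s2)]
      have e4 : (1-u)*s2^2 ≤ (1-u)*(2*(s1*s2)) :=
        mul_le_mul_of_nonneg_left k1 (by linarith)
      nlinarith [e2, e3, e4, huq, hq0]
    · have k2 : s2 ≤ 4*|D| := by
        have h4 : |s1 - s2| = s2 - s1 := by rw [abs_sub_comm]; exact abs_of_nonneg (by linarith)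
        have h3 : s2 - s1 ≤ 2*|D| := h4 ▸ hs12
        linarith
      have k3 : s2^2 ≤ 16*D^2 := by
        nlinarith [k2, abs_nonneg D, hs2p.le, sq_abs D]
      have e4 : (1-u)^2*s2^2 ≤ 4*s2^2 := by
        nlinarith [mul_nonneg (mul_nonneg (by linarith : (0:ℝ) ≤ 1+u)
          (by linarith : (0:ℝ) ≤ 3-u)) (sq_nonneg s2)]
      nlinarith [e2, e4, k3, hD2q]
  -- final decomposition
  have hdecomp : (v * (s1 * c2) - u * (c1 * s2)) / 2
      = (-((1-v)*(s1*c2)) + (1-u)*(c1*s2) + (s1*c2 - c1*s2))/2 := by ring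
  have h1 : |(-((1-v)*(s1*c2)) + (1-u)*(c1*s2) + (s1*c2 - c1*s2))|
      ≤ (1-v)*(s1*c2) + (1-u)*(c1*s2) + |s1*c2 - c1*s2| := by
    calc |(-((1-v)*(s1*c2)) + (1-u)*(c1*s2) + (s1*c2 - c1*s2))|
        ≤ |(-((1-v)*(s1*c2)))| + |(1-u)*(c1*s2)| + |s1*c2 - c1*s2| := abs_add_three _ _ _
    _ = (1-v)*(s1*c2) + (1-u)*(c1*s2) + |s1*c2 - c1*s2| := by
        rw [abs_neg, abs_of_nonneg hA0, abs_of_nonneg hB0]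
  have h2 : |(-((1-v)*(s1*c2)) + (1-u)*(c1*s2) + (s1*c2 - c1*s2))/2|
      = |(-((1-v)*(s1*c2)) + (1-u)*(c1*s2) + (s1*c2 - c1*s2))|/2 := by
    rw [abs_div, abs_two]
  have h3 : |s1*c2 - c1*s2| ≤ 2*Real.sqrt q := by linarith
  rw [hdecomp, h2]
  linarith


lemma qd_le_sqrt {θ φ u v : ℝ} (hθ : θ ∈ Ioo 0 π) (hφ : φ ∈ Ioo 0 π)
    (hu : u ∈ Icc (-1:ℝ) 1) (hv : v ∈ Icc (-1:ℝ) 1) :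
    |qd φ u v θ| ≤ 7 * Real.sqrt (qK θ φ u v) := by
  obtain ⟨hθ1, hθ2⟩ := hθ; obtain ⟨hφ1, hφ2⟩ := hφ
  obtain ⟨hu1, hu2⟩ := hu; obtain ⟨hv1, hv2⟩ := hv
  have hpi := Real.pi_pos
  have hcos : Real.cos ((θ - φ)/2) = Real.cos (θ/2) * Real.cos (φ/2) + Real.sin (θ/2) * Real.sin (φ/2) := by
    rw [show (θ - φ)/2 = θ/2 - φ/2 by ring, Real.cos_sub]
  have hD2 : Real.cos ((θ-φ)/2) = 1 - 2*(Real.sin ((θ-φ)/4))^2 := by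
    have h1 := Real.cos_two_mul ((θ-φ)/4)
    have h2 := Real.sin_sq_add_cos_sq ((θ-φ)/4)
    rw [show (θ-φ)/2 = 2*((θ-φ)/4) by ring]
    nlinarith
  have hq : qK θ φ u v = (1-u)*(Real.sin (θ/2)*Real.sin (φ/2))
      + (1-v)*(Real.cos (θ/2)*Real.cos (φ/2)) + 2*(Real.sin ((θ-φ)/4))^2 := by
    unfold qK
    nlinarith [hcos, hD2]
  have hc12 : |Real.cos (θ/2) - Real.cos (φ/2)| ≤ 2*|Real.sin ((θ-φ)/4)| := by
    have h1 : Real.cos (θ/2) - Real.cos (φ/2)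
        = -2 * Real.sin ((θ/2 + φ/2)/2) * Real.sin ((θ/2 - φ/2)/2) := Real.cos_sub_cos _ _
    rw [show (θ/2 - φ/2)/2 = (θ - φ)/4 by ring] at h1
    rw [h1, abs_mul, abs_mul]
    have h6 := Real.abs_sin_le_one ((θ/2 + φ/2)/2)
    have hD0 := abs_nonneg (Real.sin ((θ-φ)/4))
    calc |(-2:ℝ)| * |Real.sin ((θ/2+φ/2)/2)| * |Real.sin ((θ-φ)/4)|
        ≤ |(-2:ℝ)| * 1 * |Real.sin ((θ-φ)/4)| := by
          apply mul_le_mul_of_nonneg_right _ hD0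
          apply mul_le_mul_of_nonneg_left h6 (abs_nonneg _)
    _ = 2*|Real.sin ((θ-φ)/4)| := by rw [abs_neg, abs_two]; ring
  have hs12 : |Real.sin (θ/2) - Real.sin (φ/2)| ≤ 2*|Real.sin ((θ-φ)/4)| := by
    have h1 : Real.sin (θ/2) - Real.sin (φ/2)
        = 2 * Real.sin ((θ/2 - φ/2)/2) * Real.cos ((θ/2 + φ/2)/2) := Real.sin_sub_sin _ _
    rw [show (θ/2 - φ/2)/2 = (θ - φ)/4 by ring] at h1
    rw [h1, abs_mul, abs_mul]
    have h6 := Real.abs_cos_le_one ((θ/2 + φ/2)/2)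
    calc |(2:ℝ)| * |Real.sin ((θ-φ)/4)| * |Real.cos ((θ/2+φ/2)/2)|
        ≤ |(2:ℝ)| * |Real.sin ((θ-φ)/4)| * 1 := by
          apply mul_le_mul_of_nonneg_left h6 (mul_nonneg (abs_nonneg _) (abs_nonneg _))
    _ = 2*|Real.sin ((θ-φ)/4)| := by rw [abs_two]; ring
  have hS : |Real.sin (θ/2)*Real.cos (φ/2) - Real.cos (θ/2)*Real.sin (φ/2)|
      ≤ 2*|Real.sin ((θ-φ)/4)| := by
    have hsinsub : Real.sin (θ/2)*Real.cos (φ/2) - Real.cos (θ/2)*Real.sin (φ/2)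
        = Real.sin ((θ-φ)/2) := by
      rw [show (θ-φ)/2 = θ/2 - φ/2 by ring, Real.sin_sub]
    have h1 : Real.sin ((θ-φ)/2) = 2 * Real.sin ((θ-φ)/4) * Real.cos ((θ-φ)/4) := by
      rw [show (θ-φ)/2 = 2*((θ-φ)/4) by ring, Real.sin_two_mul]
    rw [hsinsub, h1, abs_mul, abs_mul, abs_two]
    have h6 := Real.abs_cos_le_one ((θ-φ)/4)
    nlinarith [abs_nonneg (Real.sin ((θ-φ)/4))]
  have := qd_le_sqrt_aux
    (Real.sin_pos_of_pos_of_lt_pi (by linarith : (0:ℝ) < θ/2) (by linarith))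
    (Real.cos_pos_of_mem_Ioo ⟨by linarith, by linarith⟩)
    (Real.sin_pos_of_pos_of_lt_pi (by linarith : (0:ℝ) < φ/2) (by linarith))
    (Real.cos_pos_of_mem_Ioo ⟨by linarith, by linarith⟩)
    (Real.sin_le_one _) (Real.cos_le_one _) (Real.sin_le_one _) (Real.cos_le_one _)
    hu1 hu2 hv1 hv2 hq hc12 hs12 hS
  unfold qd
  exact this


lemma qK_nonneg' {u v : ℝ} (hu1 : -1 ≤ u) (hu2 : u ≤ 1) (hv1 : -1 ≤ v) (hv2 : v ≤ 1) (x φ : ℝ) :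
    0 ≤ qK x φ u v := qK_nonneg ⟨hu1, hu2⟩ ⟨hv1, hv2⟩ x φ

lemma qK_le_two' {u v : ℝ} (hu : u ∈ Icc (-1:ℝ) 1) (hv : v ∈ Icc (-1:ℝ) 1) (x φ : ℝ) :
    qK x φ u v ≤ 2 := qK_le_two hu hv x φ

lemma qd_le_sqrt' {θ φ u v : ℝ} (hθ : θ ∈ Ioo 0 π) (hφ : φ ∈ Ioo 0 π)
    (hu : u ∈ Icc (-1:ℝ) 1) (hv : v ∈ Icc (-1:ℝ) 1) :
    |qd φ u v θ| ≤ 7 * Real.sqrt (qK θ φ u v) := qd_le_sqrt hθ hφ hu hv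

/-! ### term machinery, t-side -/


open Filter Topology

/-! ### term machinery, t-side -/

abbrev Tm : Type := ℕ × ℕ × ℕ × ℝ

noncomputable def tval (p q0 : ℝ) (a : Tm) (s : ℝ) : ℝ :=
  a.2.2.2 * Real.sinh (s/2) ^ a.1 * Real.cosh (s/2) ^ a.2.1 *
    (Real.cosh (s/2) - 1 + q0) ^ (p - (a.2.2.1 : ℝ))

noncomputable def tstep (p : ℝ) (a : Tm) : List Tm :=
  [(a.1 - 1, a.2.1 + 1, a.2.2.1, a.2.2.2 * (a.1:ℝ) / 2),
   (a.1 + 1, a.2.1 - 1, a.2.2.1, a.2.2.2 * (a.2.1:ℝ) / 2),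
   (a.1 + 1, a.2.1, a.2.2.1 + 1, a.2.2.2 * (p - (a.2.2.1:ℝ)) / 2)]

noncomputable def tsm (p q0 : ℝ) (L : List Tm) (s : ℝ) : ℝ :=
  (L.map (fun a => tval p q0 a s)).sum

noncomputable def tlist (p : ℝ) (m : ℕ) (L : List Tm) : List Tm :=
  (fun L' => L'.flatMap (tstep p))^[m] L

lemma tlist_zero (p : ℝ) (L : List Tm) : tlist p 0 L = L := rfl

lemma tlist_succ (p : ℝ) (m : ℕ) (L : List Tm) :
    tlist p (m+1) L = (tlist p m L).flatMap (tstep p) :=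
  Function.iterate_succ_apply' _ _ _

lemma coshQ_pos {q0 t : ℝ} (hq0 : 0 ≤ q0) (ht : 0 < t) :
    0 < Real.cosh (t/2) - 1 + q0 := by
  have h1 : 1 < Real.cosh (t/2) := Real.one_lt_cosh.mpr (by positivity)
  linarith

lemma tval_hasDerivAt (p q0 : ℝ) (hq0 : 0 ≤ q0) (a : Tm) {t : ℝ} (ht : 0 < t) :
    HasDerivAt (fun s => tval p q0 a s) (tsm p q0 (tstep p a) t) t := by
  obtain ⟨i, j, k, r⟩ := a
  have hQpos : 0 < Real.cosh (t/2) - 1 + q0 := coshQ_pos hq0 ht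
  have hhalf : HasDerivAt (fun s : ℝ => s/2) (1/2) t := (hasDerivAt_id t).div_const 2
  have hsin : HasDerivAt (fun s : ℝ => Real.sinh (s/2)) (Real.cosh (t/2) * (1/2)) t := by
    simpa [Function.comp_def] using (Real.hasDerivAt_sinh (t/2)).comp t hhalf
  have hcos : HasDerivAt (fun s : ℝ => Real.cosh (s/2)) (Real.sinh (t/2) * (1/2)) t := by
    simpa [Function.comp_def] using (Real.hasDerivAt_cosh (t/2)).comp t hhalf
  have hQ : HasDerivAt (fun s : ℝ => Real.cosh (s/2) - 1 + q0) (Real.sinh (t/2) * (1/2)) t := by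
    simpa using (hcos.sub_const 1).add_const q0
  have hP : HasDerivAt (fun s : ℝ => (Real.cosh (s/2) - 1 + q0) ^ (p - (k:ℝ)))
      (Real.sinh (t/2) * (1/2) * (p - (k:ℝ)) * (Real.cosh (t/2) - 1 + q0) ^ (p - (k:ℝ) - 1)) t :=
    hQ.rpow_const (Or.inl hQpos.ne')
  have hsp := hsin.pow i
  have hcp := hcos.pow j
  have H := (((hasDerivAt_const t r).mul hsp).mul hcp).mul hP
  replace H : HasDerivAt (fun s => tval p q0 (i, j, k, r) s) _ t := H
  convert H using 1
  simp only [tsm, tstep, tval, List.map_cons, List.map_nil, List.sum_cons, List.sum_nil, Pi.pow_apply,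
    Pi.mul_apply]
  push_cast
  rw [show p - ((k:ℝ) + 1) = p - (k:ℝ) - 1 by ring]
  ring

lemma tsum_hasDerivAt (p q0 : ℝ) (hq0 : 0 ≤ q0) (L : List Tm) {t : ℝ} (ht : 0 < t) :
    HasDerivAt (tsm p q0 L) (tsm p q0 (L.flatMap (tstep p)) t) t := by
  induction L with
  | nil =>
    have h0 : HasDerivAt (tsm p q0 []) 0 t := hasDerivAt_const t (0:ℝ)
    simpa [tsm] using h0
  | cons a L ih =>
    have h := (tval_hasDerivAt p q0 hq0 a ht).add ih
    have e1 : (fun s => tval p q0 a s) + tsm p q0 L = tsm p q0 (a :: L) := by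
      funext s; simp [tsm]
    have e2 : tsm p q0 (tstep p a) t + tsm p q0 (L.flatMap (tstep p)) t
        = tsm p q0 ((a :: L).flatMap (tstep p)) t := by
      simp [tsm, List.flatMap_cons]
    rw [e1, e2] at h
    exact h

lemma teval (p q0 : ℝ) (hq0 : 0 ≤ q0) (L : List Tm) (m : ℕ) :
    ∀ t : ℝ, 0 < t → iteratedDeriv m (tsm p q0 L) t = tsm p q0 (tlist p m L) t := by
  induction m with
  | zero => intro t ht; rw [tlist_zero, iteratedDeriv_zero]
  | succ m ih =>
    intro t ht
    rw [iteratedDeriv_succ]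
    have hev : iteratedDeriv m (tsm p q0 L) =ᶠ[nhds t] tsm p q0 (tlist p m L) := by
      filter_upwards [Ioi_mem_nhds ht] with s hs
      exact ih s hs
    rw [hev.deriv_eq]
    rw [tlist_succ]
    exact (tsum_hasDerivAt p q0 hq0 (tlist p m L) ht).deriv

lemma tinv (p : ℝ) (L0 : List Tm) (m : ℕ) :
    ∀ a ∈ tlist p m L0, a.2.2.2 ≠ 0 → ∃ b ∈ L0, b.2.2.2 ≠ 0 ∧
      a.1 + a.2.1 + b.2.2.1 = b.1 + b.2.1 + a.2.2.1 ∧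
      b.1 + 2*a.2.2.1 ≤ a.1 + 2*b.2.2.1 + m := by
  induction m with
  | zero => intro a ha hr; exact ⟨a, ha, hr, rfl, by omega⟩
  | succ m ih =>
    intro a ha hr
    rw [tlist_succ, List.mem_flatMap] at ha
    obtain ⟨c, hc, hac⟩ := ha
    obtain ⟨i, j, k, r⟩ := c
    simp only [tstep, List.mem_cons, List.not_mem_nil, or_false] at hac
    rcases hac with h1 | h1 | h1 <;> subst h1 <;> simp only at hr ⊢
    · have hrne : r ≠ 0 := fun h => hr (by simp [h])
      have hine : i ≠ 0 := by
        intro h; apply hr; simp [h]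
      obtain ⟨b, hb, hbr, heq, hle⟩ := ih (i,j,k,r) hc hrne
      exact ⟨b, hb, hbr, by simp_all; omega, by simp_all; omega⟩
    · have hrne : r ≠ 0 := fun h => hr (by simp [h])
      have hjne : j ≠ 0 := by
        intro h; apply hr; simp [h]
      obtain ⟨b, hb, hbr, heq, hle⟩ := ih (i,j,k,r) hc hrne
      exact ⟨b, hb, hbr, by simp_all; omega, by simp_all; omega⟩
    · have hrne : r ≠ 0 := fun h => hr (by simp [h])
      obtain ⟨b, hb, hbr, heq, hle⟩ := ih (i,j,k,r) hc hrne
      exact ⟨b, hb, hbr, by simp_all; omega, by simp_all; omega⟩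

/-! ### term machinery, θ-side -/

noncomputable def oval (pp C0 φ u v : ℝ) (a : Tm) (x : ℝ) : ℝ :=
  a.2.2.2 * qd φ u v x ^ a.1 * (1 - qK x φ u v) ^ a.2.1 *
    (C0 + qK x φ u v) ^ (pp - (a.2.2.1 : ℝ))

noncomputable def ostep (pp : ℝ) (a : Tm) : List Tm :=
  [(a.1 - 1, a.2.1 + 1, a.2.2.1, a.2.2.2 * (a.1:ℝ) / 4),
   (a.1 + 1, a.2.1 - 1, a.2.2.1, -(a.2.2.2 * (a.2.1:ℝ))),
   (a.1 + 1, a.2.1, a.2.2.1 + 1, a.2.2.2 * (pp - (a.2.2.1:ℝ)))]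

noncomputable def osum (pp C0 φ u v : ℝ) (L : List Tm) (x : ℝ) : ℝ :=
  (L.map (fun a => oval pp C0 φ u v a x)).sum

noncomputable def olist (pp : ℝ) (N : ℕ) (L : List Tm) : List Tm :=
  (fun L' => L'.flatMap (ostep pp))^[N] L

lemma olist_zero (pp : ℝ) (L : List Tm) : olist pp 0 L = L := rfl

lemma olist_succ (pp : ℝ) (N : ℕ) (L : List Tm) :
    olist pp (N+1) L = (olist pp N L).flatMap (ostep pp) :=
  Function.iterate_succ_apply' _ _ _

lemma hasDerivAt_sin_half (x : ℝ) :
    HasDerivAt (fun y : ℝ => Real.sin (y/2)) (Real.cos (x/2) * (1/2)) x := by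
  simpa [Function.comp_def] using
    (Real.hasDerivAt_sin (x/2)).comp x ((hasDerivAt_id x).div_const 2)

lemma hasDerivAt_cos_half (x : ℝ) :
    HasDerivAt (fun y : ℝ => Real.cos (y/2)) (-Real.sin (x/2) * (1/2)) x := by
  simpa [Function.comp_def] using
    (Real.hasDerivAt_cos (x/2)).comp x ((hasDerivAt_id x).div_const 2)

lemma hasDerivAt_qK (φ u v x : ℝ) :
    HasDerivAt (fun y => qK y φ u v) (qd φ u v x) x := by
  have h1 := ((hasDerivAt_sin_half x).mul_const (Real.sin (φ/2))).const_mul u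
  have h2 := ((hasDerivAt_cos_half x).mul_const (Real.cos (φ/2))).const_mul v
  have H := ((hasDerivAt_const x (1:ℝ)).sub h1).sub h2
  have e1 : (fun y : ℝ => 1 - u * (Real.sin (y/2) * Real.sin (φ/2))
      - v * (Real.cos (y/2) * Real.cos (φ/2))) = (fun y => qK y φ u v) := rfl
  replace H : HasDerivAt (fun y => qK y φ u v) _ x := H
  convert H using 1
  unfold qd
  ring

lemma hasDerivAt_qd (φ u v x : ℝ) :
    HasDerivAt (qd φ u v) ((1 - qK x φ u v)/4) x := by
  have h1 := ((hasDerivAt_sin_half x).mul_const (Real.cos (φ/2))).const_mul v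
  have h2 := ((hasDerivAt_cos_half x).mul_const (Real.sin (φ/2))).const_mul u
  have H := (h1.sub h2).div_const 2
  have e1 : (fun y : ℝ => (v * (Real.sin (y/2) * Real.cos (φ/2))
      - u * (Real.cos (y/2) * Real.sin (φ/2))) / 2) = qd φ u v := rfl
  replace H : HasDerivAt (qd φ u v) _ x := H
  convert H using 1
  unfold qK
  ring

lemma oval_hasDerivAt (pp C0 φ u v : ℝ) (hC0 : 0 < C0)
    (hu1 : -1 ≤ u) (hu2 : u ≤ 1) (hv1 : -1 ≤ v) (hv2 : v ≤ 1) (a : Tm) (x : ℝ) :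
    HasDerivAt (fun y => oval pp C0 φ u v a y) (osum pp C0 φ u v (ostep pp a) x) x := by
  obtain ⟨l, m, k, r⟩ := a
  have hpos : 0 < C0 + qK x φ u v := by
    have := qK_nonneg' hu1 hu2 hv1 hv2 x φ
    linarith
  have hqk := hasDerivAt_qK φ u v x
  have hqd := hasDerivAt_qd φ u v x
  have hl := hqd.pow l
  have hm := ((hasDerivAt_const x (1:ℝ)).sub hqk).pow m
  have hP : HasDerivAt (fun y : ℝ => (C0 + qK y φ u v) ^ (pp - (k:ℝ)))
      (qd φ u v x * (pp - (k:ℝ)) * (C0 + qK x φ u v) ^ (pp - (k:ℝ) - 1)) x :=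
    (hqk.const_add C0).rpow_const (Or.inl hpos.ne')
  have H := (((hasDerivAt_const x r).mul hl).mul hm).mul hP
  replace H : HasDerivAt (fun y => oval pp C0 φ u v (l, m, k, r) y) _ x := H
  convert H using 1
  simp only [osum, ostep, oval, List.map_cons, List.map_nil, List.sum_cons, List.sum_nil, Pi.pow_apply,
    Pi.mul_apply, Pi.sub_apply]
  push_cast
  rw [show pp - ((k:ℝ) + 1) = pp - (k:ℝ) - 1 by ring]
  ring

lemma osum_hasDerivAt (pp C0 φ u v : ℝ) (hC0 : 0 < C0)
    (hu1 : -1 ≤ u) (hu2 : u ≤ 1) (hv1 : -1 ≤ v) (hv2 : v ≤ 1) (L : List Tm) (x : ℝ) :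
    HasDerivAt (osum pp C0 φ u v L) (osum pp C0 φ u v (L.flatMap (ostep pp)) x) x := by
  induction L with
  | nil =>
    have h0 : HasDerivAt (osum pp C0 φ u v []) 0 x := hasDerivAt_const x (0:ℝ)
    simpa [osum] using h0
  | cons a L ih =>
    have h := (oval_hasDerivAt pp C0 φ u v hC0 hu1 hu2 hv1 hv2 a x).add ih
    have e1 : (fun y => oval pp C0 φ u v a y) + osum pp C0 φ u v L
        = osum pp C0 φ u v (a :: L) := by
      funext y; simp [osum]
    have e2 : osum pp C0 φ u v (ostep pp a) x + osum pp C0 φ u v (L.flatMap (ostep pp)) x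
        = osum pp C0 φ u v ((a :: L).flatMap (ostep pp)) x := by
      simp [osum, List.flatMap_cons]
    rw [e1, e2] at h
    exact h

lemma oeval (pp C0 φ u v : ℝ) (hC0 : 0 < C0)
    (hu1 : -1 ≤ u) (hu2 : u ≤ 1) (hv1 : -1 ≤ v) (hv2 : v ≤ 1) (L : List Tm) (N : ℕ) :
    iteratedDeriv N (osum pp C0 φ u v L) = osum pp C0 φ u v (olist pp N L) := by
  induction N with
  | zero => rw [olist_zero, iteratedDeriv_zero]
  | succ N ih =>
    rw [iteratedDeriv_succ, ih, olist_succ]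
    funext x
    exact (osum_hasDerivAt pp C0 φ u v hC0 hu1 hu2 hv1 hv2 (olist pp N L) x).deriv

lemma oinv (pp : ℝ) (N : ℕ) :
    ∀ a ∈ olist pp N [((0:ℕ),(0:ℕ),(0:ℕ),(1:ℝ))], a.2.2.2 ≠ 0 →
      2*a.2.2.1 ≤ a.1 + N ∧ (1 ≤ N → 1 ≤ a.2.2.1) ∧
      (N = 0 → a = ((0:ℕ),(0:ℕ),(0:ℕ),(1:ℝ))) := by
  induction N with
  | zero =>
    intro a ha hr
    rw [olist_zero, List.mem_singleton] at ha
    exact ⟨by simp [ha], by omega, fun _ => ha⟩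
  | succ N ih =>
    intro a ha hr
    rw [olist_succ, List.mem_flatMap] at ha
    obtain ⟨c, hc, hac⟩ := ha
    obtain ⟨l, m, k, r⟩ := c
    simp only [ostep, List.mem_cons, List.not_mem_nil, or_false] at hac
    rcases hac with h1 | h1 | h1 <;> subst h1 <;> simp only at hr ⊢
    · have hrc : r ≠ 0 := fun h => hr (by simp [h])
      have hlne : l ≠ 0 := fun h => hr (by simp [h])
      obtain ⟨hinv, hk1, hN0⟩ := ih (l,m,k,r) hc hrc
      simp only at hinv hk1 hN0
      have hkk : 1 ≤ k := by
        rcases Nat.eq_zero_or_pos N with hN | hN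
        · exfalso; apply hlne
          have h2 := hN0 hN
          simp [Prod.ext_iff] at h2
          exact h2.1
        · exact hk1 hN
      exact ⟨by omega, fun _ => hkk, by omega⟩
    · have hrc : r ≠ 0 := fun h => hr (by simp [h])
      have hmne : m ≠ 0 := fun h => hr (by simp [h])
      obtain ⟨hinv, hk1, hN0⟩ := ih (l,m,k,r) hc hrc
      simp only at hinv hk1 hN0
      have hkk : 1 ≤ k := by
        rcases Nat.eq_zero_or_pos N with hN | hN
        · exfalso; apply hmne
          have h2 := hN0 hN
          simp [Prod.ext_iff] at h2
          exact h2.2.1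
        · exact hk1 hN
      exact ⟨by omega, fun _ => hkk, by omega⟩
    · have hrc : r ≠ 0 := fun h => hr (by simp [h])
      obtain ⟨hinv, hk1, hN0⟩ := ih (l,m,k,r) hc hrc
      simp only at hinv hk1 hN0
      exact ⟨by omega, fun _ => by omega, by omega⟩

/-! ### smoothness and linearity -/

lemma mul_le_mul4 {a a' b b' c c' d : ℝ} (ha : a ≤ a') (hb : b ≤ b') (hc : c ≤ c')
    (h0b : 0 ≤ b) (h0c : 0 ≤ c) (h0d : 0 ≤ d) (h0a' : 0 ≤ a') (h0b' : 0 ≤ b') :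
    a * b * c * d ≤ a' * b' * c' * d := by
  apply mul_le_mul_of_nonneg_right _ h0d
  exact mul_le_mul (mul_le_mul ha hb h0b h0a') hc h0c (mul_nonneg h0a' h0b')

lemma contDiff_qK (φ u v : ℝ) : ContDiff ℝ (⊤:ℕ∞) (fun x => qK x φ u v) := by
  have h1 : ContDiff ℝ (⊤:ℕ∞) (fun x : ℝ => Real.sin (x/2)) :=
    Real.contDiff_sin.comp (contDiff_id.div_const 2)
  have h2 : ContDiff ℝ (⊤:ℕ∞) (fun x : ℝ => Real.cos (x/2)) :=
    Real.contDiff_cos.comp (contDiff_id.div_const 2)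
  exact (contDiff_const.sub (contDiff_const.mul (h1.mul contDiff_const))).sub
    (contDiff_const.mul (h2.mul contDiff_const))

lemma contDiff_obase {u v : ℝ} (pp C0 φ : ℝ) (hC0 : 0 < C0)
    (hu1 : -1 ≤ u) (hu2 : u ≤ 1) (hv1 : -1 ≤ v) (hv2 : v ≤ 1) :
    ContDiff ℝ (⊤:ℕ∞) (fun x => (C0 + qK x φ u v) ^ pp) := by
  rw [contDiff_iff_contDiffAt]
  intro x
  have hpos : 0 < C0 + qK x φ u v := by
    have := qK_nonneg' hu1 hu2 hv1 hv2 x φ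
    linarith
  exact (contDiff_const.add (contDiff_qK φ u v)).contDiffAt.rpow_const_of_ne hpos.ne'

lemma itd_zero_fun (n : ℕ) : iteratedDeriv n (fun _ : ℝ => (0:ℝ)) = fun _ => 0 := by
  induction n with
  | zero => rw [iteratedDeriv_zero]
  | succ n ih =>
    rw [iteratedDeriv_succ']
    have h : deriv (fun _ : ℝ => (0:ℝ)) = fun _ => 0 := by
      funext x; simp
    rw [h, ih]

lemma itd_add {f g : ℝ → ℝ} (hf : ContDiff ℝ (⊤:ℕ∞) f) (hg : ContDiff ℝ (⊤:ℕ∞) g)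
    (n : ℕ) (x : ℝ) :
    iteratedDeriv n (fun y => f y + g y) x = iteratedDeriv n f x + iteratedDeriv n g x := by
  have h1 : (fun y => f y + g y) = f + g := rfl
  rw [h1, ← iteratedDerivWithin_univ, ← iteratedDerivWithin_univ, ← iteratedDerivWithin_univ]
  exact iteratedDerivWithin_add (mem_univ x) uniqueDiffOn_univ
    (hf.contDiffWithinAt.of_le (by exact_mod_cast le_top)) (hg.contDiffWithinAt.of_le (by exact_mod_cast le_top))

lemma itd_const_mul {f : ℝ → ℝ} (hf : ContDiff ℝ (⊤:ℕ∞) f) (c : ℝ) (n : ℕ) (x : ℝ) :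
    iteratedDeriv n (fun y => c * f y) x = c * iteratedDeriv n f x := by
  rw [← iteratedDerivWithin_univ, ← iteratedDerivWithin_univ]
  exact iteratedDerivWithin_const_mul (mem_univ x) uniqueDiffOn_univ c
    (hf.contDiffWithinAt.of_le (by exact_mod_cast le_top))

lemma contDiff_list_sum {T : Type*} (L : List T) (F : T → ℝ → ℝ)
    (hF : ∀ a ∈ L, ContDiff ℝ (⊤:ℕ∞) (F a)) :
    ContDiff ℝ (⊤:ℕ∞) (fun x => (L.map (fun a => F a x)).sum) := by
  induction L with
  | nil => simpa using contDiff_const (c := (0:ℝ))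
  | cons a L ih =>
    simp only [List.map_cons, List.sum_cons]
    exact (hF a (by simp)).add (ih fun b hb => hF b (by simp [hb]))

lemma itd_list_sum {T : Type*} (L : List T) (F : T → ℝ → ℝ)
    (hF : ∀ a ∈ L, ContDiff ℝ (⊤:ℕ∞) (F a)) (n : ℕ) (x : ℝ) :
    iteratedDeriv n (fun y => (L.map (fun a => F a y)).sum) x
      = (L.map (fun a => iteratedDeriv n (F a) x)).sum := by
  induction L with
  | nil =>
    simp only [List.map_nil, List.sum_nil]
    exact congrFun (itd_zero_fun n) x
  | cons a L ih =>
    simp only [List.map_cons, List.sum_cons]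
    rw [itd_add (hF a (by simp)) (contDiff_list_sum L F (fun b hb => hF b (by simp [hb]))) n x]
    rw [ih (fun b hb => hF b (by simp [hb]))]

/-! ### the θ-side bound -/

lemma OB (pp : ℝ) (N : ℕ) :
    ∃ C : ℝ, 0 < C ∧ ∀ θ φ u v C0 : ℝ, θ ∈ Ioo 0 π → φ ∈ Ioo 0 π →
      u ∈ Icc (-1:ℝ) 1 → v ∈ Icc (-1:ℝ) 1 → 0 < C0 →
      ((C0 + qK θ φ u v ≤ 3 →
        |osum pp C0 φ u v (olist pp N [(0,0,0,1)]) θ|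
          ≤ C * (C0 + qK θ φ u v) ^ (pp - N/2)) ∧
       (1/9 ≤ C0 → 1 ≤ N →
        |osum pp C0 φ u v (olist pp N [(0,0,0,1)]) θ|
          ≤ C * (C0 + qK θ φ u v) ^ (pp - 1))) := by
  refine ⟨1 + ((olist pp N [(0,0,0,1)]).map
      (fun a => |a.2.2.2| * 10^a.1 * 3^(a.1+N) * 9^a.2.2.1)).sum, ?_, ?_⟩
  · have h := list_sum_nonneg' (olist pp N [(0,0,0,1)])
      (fun a => |a.2.2.2| * 10^a.1 * 3^(a.1+N) * 9^a.2.2.1) (fun a _ => by positivity)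
    linarith
  intro θ φ u v C0 hθ hφ hu hv hC0
  have hq0 : 0 ≤ qK θ φ u v := qK_nonneg' hu.1 hu.2 hv.1 hv.2 θ φ
  have hQ : 0 < C0 + qK θ φ u v := by linarith
  have hq2 : qK θ φ u v ≤ 2 := qK_le_two' hu hv θ φ
  have h1q : |1 - qK θ φ u v| ≤ 1 := abs_le.mpr ⟨by linarith, by linarith⟩
  have habs : ∀ a : Tm, |oval pp C0 φ u v a θ| = |a.2.2.2| * |qd φ u v θ|^a.1
      * |1 - qK θ φ u v|^a.2.1 * (C0 + qK θ φ u v) ^ (pp - (a.2.2.1:ℝ)) := by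
    intro a
    unfold oval
    rw [abs_mul, abs_mul, abs_mul, abs_pow, abs_pow,
      abs_of_pos (Real.rpow_pos_of_pos hQ _)]
  constructor
  · -- regime (a) : Q ≤ 3
    intro hQ3
    have hE : 0 ≤ (C0 + qK θ φ u v) ^ (pp - N/2) := (Real.rpow_pos_of_pos hQ _).le
    have h7 : |qd φ u v θ| ≤ 7 * Real.sqrt (C0 + qK θ φ u v) := by
      refine (qd_le_sqrt' hθ hφ hu hv).trans ?_
      have h := Real.sqrt_le_sqrt (show qK θ φ u v ≤ C0 + qK θ φ u v by linarith)
      linarith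
    have key : ∀ a ∈ olist pp N [(0,0,0,1)], |oval pp C0 φ u v a θ|
        ≤ (|a.2.2.2| * 10^a.1 * 3^(a.1+N) * 9^a.2.2.1) * (C0 + qK θ φ u v) ^ (pp - N/2) := by
      intro a ha
      rcases eq_or_ne a.2.2.2 0 with hr | hr
      · rw [habs a, hr]
        simp [hE]
      · obtain ⟨hinv, -, -⟩ := oinv pp N a ha hr
        obtain ⟨l, m, k, r⟩ := a
        simp only at hr hinv ⊢
        rw [habs (l,m,k,r)]
        simp only
        have b1 : |qd φ u v θ|^l ≤ 7^l * (C0 + qK θ φ u v) ^ ((l:ℝ)/2) :=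
          abs_pow_le_sqrt hQ.le (by norm_num) h7 l
        have b2 : |1 - qK θ φ u v|^m ≤ 1 := pow_le_one₀ (abs_nonneg _) h1q
        have step1 : |r| * |qd φ u v θ|^l * |1 - qK θ φ u v|^m
              * (C0 + qK θ φ u v) ^ (pp - (k:ℝ))
            ≤ |r| * (7^l * (C0 + qK θ φ u v) ^ ((l:ℝ)/2)) * 1
              * (C0 + qK θ φ u v) ^ (pp - (k:ℝ)) :=
          mul_le_mul4 le_rfl b1 b2 (pow_nonneg (abs_nonneg _) _) (pow_nonneg (abs_nonneg _) _)
            (Real.rpow_pos_of_pos hQ _).le (abs_nonneg _)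
            (by positivity)
        have e1 : |r| * (7^l * (C0 + qK θ φ u v) ^ ((l:ℝ)/2)) * 1
              * (C0 + qK θ φ u v) ^ (pp - (k:ℝ))
            = (|r| * 7^l) * ((C0 + qK θ φ u v) ^ ((l:ℝ)/2 + (pp - (k:ℝ)))) := by
          rw [Real.rpow_add hQ]; ring
        have hinvR : ((2*k : ℕ) : ℝ) ≤ ((l + N : ℕ) : ℝ) := Nat.cast_le.mpr hinv
        push_cast at hinvR
        have step2 : (C0 + qK θ φ u v) ^ ((l:ℝ)/2 + (pp - (k:ℝ)))
            ≤ 3^(l+N) * (C0 + qK θ φ u v) ^ (pp - N/2) := by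
          apply key_hi hQ hQ3 (by norm_num) (l+N) (by linarith) ?_
          push_cast
          have hk0 : (0:ℝ) ≤ (k:ℝ) := Nat.cast_nonneg k
          linarith
        have f1 : |r| * 7^l * 3^(l+N) ≤ |r| * 10^l * 3^(l+N) * 9^k := by
          have h710 : (7:ℝ)^l ≤ 10^l := pow_le_pow_left₀ (by norm_num) (by norm_num) l
          have h9 : (1:ℝ) ≤ 9^k := one_le_pow₀ (by norm_num)
          calc |r| * 7^l * 3^(l+N) = (|r| * 7^l * 3^(l+N)) * 1 := (mul_one _).symm
          _ ≤ (|r| * 10^l * 3^(l+N)) * 9^k := by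
              apply mul_le_mul _ h9 zero_le_one (by positivity)
              apply mul_le_mul_of_nonneg_right _ (by positivity)
              exact mul_le_mul_of_nonneg_left h710 (abs_nonneg r)
          _ = |r| * 10^l * 3^(l+N) * 9^k := by ring
        calc |r| * |qd φ u v θ|^l * |1 - qK θ φ u v|^m * (C0 + qK θ φ u v) ^ (pp - (k:ℝ))
            ≤ |r| * (7^l * (C0 + qK θ φ u v) ^ ((l:ℝ)/2)) * 1
              * (C0 + qK θ φ u v) ^ (pp - (k:ℝ)) := step1
        _ = (|r| * 7^l) * ((C0 + qK θ φ u v) ^ ((l:ℝ)/2 + (pp - (k:ℝ)))) := e1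
        _ ≤ (|r| * 7^l) * (3^(l+N) * (C0 + qK θ φ u v) ^ (pp - N/2)) :=
            mul_le_mul_of_nonneg_left step2 (by positivity)
        _ = (|r| * 7^l * 3^(l+N)) * (C0 + qK θ φ u v) ^ (pp - N/2) := by ring
        _ ≤ (|r| * 10^l * 3^(l+N) * 9^k) * (C0 + qK θ φ u v) ^ (pp - N/2) :=
            mul_le_mul_of_nonneg_right f1 hE
    have hb := list_sum_bound (olist pp N [(0,0,0,1)]) (fun a => oval pp C0 φ u v a θ)
      (fun a => |a.2.2.2| * 10^a.1 * 3^(a.1+N) * 9^a.2.2.1) _ hE key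
    have hmono : ((olist pp N [(0,0,0,1)]).map
        (fun a => |a.2.2.2| * 10^a.1 * 3^(a.1+N) * 9^a.2.2.1)).sum * (C0 + qK θ φ u v) ^ (pp - N/2)
        ≤ (1 + ((olist pp N [(0,0,0,1)]).map
          (fun a => |a.2.2.2| * 10^a.1 * 3^(a.1+N) * 9^a.2.2.1)).sum) * (C0 + qK θ φ u v) ^ (pp - N/2) := by
      apply mul_le_mul_of_nonneg_right (by linarith) hE
    exact le_trans hb hmono
  · -- regime (b) : C0 ≥ 1/9, N ≥ 1
    intro h19 hN1
    have hE : 0 ≤ (C0 + qK θ φ u v) ^ (pp - 1) := (Real.rpow_pos_of_pos hQ _).le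
    have hqd10 : |qd φ u v θ| ≤ 10 := by
      have h1 := qd_le_sqrt' hθ hφ hu hv
      have h2 : Real.sqrt (qK θ φ u v) ≤ Real.sqrt 2 := Real.sqrt_le_sqrt hq2
      have h3 : Real.sqrt 2 ≤ 10/7 := by
        nlinarith [Real.sq_sqrt (show (0:ℝ) ≤ 2 by norm_num), Real.sqrt_nonneg 2]
      linarith
    have key : ∀ a ∈ olist pp N [(0,0,0,1)], |oval pp C0 φ u v a θ|
        ≤ (|a.2.2.2| * 10^a.1 * 3^(a.1+N) * 9^a.2.2.1) * (C0 + qK θ φ u v) ^ (pp - 1) := by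
      intro a ha
      rcases eq_or_ne a.2.2.2 0 with hr | hr
      · rw [habs a, hr]
        simp [hE]
      · obtain ⟨-, hk1, -⟩ := oinv pp N a ha hr
        have hk := hk1 hN1
        obtain ⟨l, m, k, r⟩ := a
        simp only at hr hk ⊢
        rw [habs (l,m,k,r)]
        simp only
        have b1 : |qd φ u v θ|^l ≤ 10^l := pow_le_pow_left₀ (abs_nonneg _) hqd10 l
        have b2 : |1 - qK θ φ u v|^m ≤ 1 := pow_le_one₀ (abs_nonneg _) h1q
        have hkR : (1:ℝ) ≤ (k:ℝ) := by exact_mod_cast hk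
        have part2 : (C0 + qK θ φ u v) ^ (pp - (k:ℝ)) ≤ 9^k * (C0 + qK θ φ u v) ^ (pp - 1) := by
          have h : (C0 + qK θ φ u v) ^ (pp - (k:ℝ))
              ≤ ((1:ℝ)/9)⁻¹ ^ k * (C0 + qK θ φ u v) ^ (pp - 1) :=
            key_lo (show (0:ℝ) < 1/9 by norm_num)
              (show (1:ℝ)/9 ≤ C0 + qK θ φ u v by linarith) (by norm_num) k
              (by linarith) (by push_cast; linarith)
          rwa [show ((1:ℝ)/9)⁻¹ = 9 by norm_num] at h
        have part1 : |r| * |qd φ u v θ|^l * |1 - qK θ φ u v|^m ≤ |r| * 10^l * 1 :=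
          mul_le_mul (mul_le_mul le_rfl b1 (pow_nonneg (abs_nonneg _) _) (abs_nonneg _)) b2
            (pow_nonneg (abs_nonneg _) _) (by positivity)
        calc |r| * |qd φ u v θ|^l * |1 - qK θ φ u v|^m * (C0 + qK θ φ u v) ^ (pp - (k:ℝ))
            ≤ (|r| * 10^l * 1) * (9^k * (C0 + qK θ φ u v) ^ (pp - 1)) :=
              mul_le_mul part1 part2 (Real.rpow_pos_of_pos hQ _).le (by positivity)
        _ = (|r| * 10^l * 9^k) * (C0 + qK θ φ u v) ^ (pp - 1) := by ring
        _ ≤ (|r| * 10^l * 3^(l+N) * 9^k) * (C0 + qK θ φ u v) ^ (pp - 1) := by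
            apply mul_le_mul_of_nonneg_right _ hE
            have h3 : (1:ℝ) ≤ 3^(l+N) := one_le_pow₀ (by norm_num)
            nlinarith [abs_nonneg r, pow_nonneg (show (0:ℝ) ≤ 10 by norm_num) l,
              pow_nonneg (show (0:ℝ) ≤ 9 by norm_num) k,
              mul_nonneg (mul_nonneg (abs_nonneg r) (pow_nonneg (show (0:ℝ) ≤ 10 by norm_num) l))
                (pow_nonneg (show (0:ℝ) ≤ 9 by norm_num) k)]
    have hb := list_sum_bound (olist pp N [(0,0,0,1)]) (fun a => oval pp C0 φ u v a θ)
      (fun a => |a.2.2.2| * 10^a.1 * 3^(a.1+N) * 9^a.2.2.1) _ hE key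
    have hmono : ((olist pp N [(0,0,0,1)]).map
        (fun a => |a.2.2.2| * 10^a.1 * 3^(a.1+N) * 9^a.2.2.1)).sum * (C0 + qK θ φ u v) ^ (pp - 1)
        ≤ (1 + ((olist pp N [(0,0,0,1)]).map
          (fun a => |a.2.2.2| * 10^a.1 * 3^(a.1+N) * 9^a.2.2.1)).sum) * (C0 + qK θ φ u v) ^ (pp - 1) := by
      apply mul_le_mul_of_nonneg_right (by linarith) hE
    exact le_trans hb hmono

/-! ### scaling (for case iv) -/

noncomputable def tscale (c : ℝ) (a : Tm) : Tm := (a.1, a.2.1, a.2.2.1, c * a.2.2.2)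

lemma tstep_tscale (p c : ℝ) (a : Tm) :
    tstep p (tscale c a) = (tstep p a).map (tscale c) := by
  obtain ⟨i,j,k,r⟩ := a
  simp only [tstep, tscale, List.map_cons, List.map_nil, List.cons.injEq, Prod.mk.injEq]
  and_intros <;> first | rfl | trivial | ring

lemma tlist_map_tscale (p c : ℝ) (m : ℕ) (L : List Tm) :
    tlist p m (L.map (tscale c)) = (tlist p m L).map (tscale c) := by
  induction m with
  | zero => rfl
  | succ m ih =>
    rw [tlist_succ, tlist_succ, ih]
    rw [List.map_flatMap, List.flatMap_map]
    congr 1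
    funext a
    exact tstep_tscale p c a

lemma tval_tscale (p q0 c : ℝ) (a : Tm) (s : ℝ) :
    tval p q0 (tscale c a) s = c * tval p q0 a s := by
  obtain ⟨i,j,k,r⟩ := a
  simp only [tval, tscale]
  ring

lemma tsum_map_tscale (p q0 c : ℝ) (L : List Tm) (s : ℝ) :
    tsm p q0 (L.map (tscale c)) s = c * tsm p q0 L s := by
  induction L with
  | nil => simp [tsm]
  | cons a L ih =>
    simp only [tsm, List.map_cons, List.sum_cons] at *
    rw [tval_tscale, ih]
    ring

lemma tlist_append (p : ℝ) (m : ℕ) (L1 L2 : List Tm) :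
    tlist p m (L1 ++ L2) = tlist p m L1 ++ tlist p m L2 := by
  induction m with
  | zero => rfl
  | succ m ih => rw [tlist_succ, tlist_succ, tlist_succ, ih, List.flatMap_append]

lemma tsum_append (p q0 : ℝ) (L1 L2 : List Tm) (s : ℝ) :
    tsm p q0 (L1 ++ L2) s = tsm p q0 L1 s + tsm p q0 L2 s := by
  simp [tsm]

/-! ### cosh/sinh range lemmas -/

lemma cosh_t_le {t : ℝ} (ht : 0 < t) (ht1 : t ≤ 1) : Real.cosh (t/2) ≤ 2 := by
  refine le_trans ?_ cosh_half_ub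
  rw [Real.cosh_le_cosh, abs_of_pos (by linarith), abs_of_pos (by norm_num)]
  linarith

lemma cosh_t_ge {t : ℝ} (ht : 1 < t) : (10/9:ℝ) ≤ Real.cosh (t/2) := by
  refine le_trans cosh_half_lb ?_
  rw [Real.cosh_le_cosh, abs_of_pos (by norm_num), abs_of_pos (by linarith)]
  linarith

lemma sinh_t_nonneg {t : ℝ} (ht : 0 < t) : 0 ≤ Real.sinh (t/2) :=
  Real.sinh_nonneg_iff.mpr (by linarith)

lemma sinh_le_sqrtQ {t q0 : ℝ} (ht : 0 < t) (ht1 : t ≤ 1) (hq0 : 0 ≤ q0) :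
    Real.sinh (t/2) ≤ 2 * Real.sqrt (Real.cosh (t/2) - 1 + q0) := by
  have hc2 : Real.cosh (t/2) ≤ 2 := cosh_t_le ht ht1
  have hc1 : 1 < Real.cosh (t/2) := Real.one_lt_cosh.mpr (by positivity)
  apply le_sqrt_of_sq_le (sinh_t_nonneg ht) (by norm_num) (by linarith)
  nlinarith [Real.cosh_sq_sub_sinh_sq (t/2)]

lemma cosh_le_10Q {t q0 : ℝ} (ht : 1 < t) (hq0 : 0 ≤ q0) :
    Real.cosh (t/2) ≤ 10 * (Real.cosh (t/2) - 1 + q0) := by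
  have := cosh_t_ge ht
  linarith

lemma sinh_le_10Q {t q0 : ℝ} (ht : 1 < t) (hq0 : 0 ≤ q0) :
    Real.sinh (t/2) ≤ 10 * (Real.cosh (t/2) - 1 + q0) := by
  have h1 : Real.sinh (t/2) < Real.cosh (t/2) := Real.sinh_lt_cosh _
  have := cosh_le_10Q (q0 := q0) ht hq0
  linarith

/-! ### the large-t bound for pure t-sums -/

lemma tlarge_bound (p' q0 : ℝ) (hq0 : 0 ≤ q0) {t : ℝ} (ht : 1 < t)
    (L : List Tm) (d : ℕ) (hL : ∀ a ∈ L, a.2.2.2 ≠ 0 → a.1 + a.2.1 = d + a.2.2.1) :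
    |tsm p' q0 L t| ≤ ((L.map (fun a => |a.2.2.2| * 10^(a.1+a.2.1))).sum)
      * (Real.cosh (t/2) - 1 + q0) ^ (p' + (d:ℝ)) := by
  have hQ : 0 < Real.cosh (t/2) - 1 + q0 := coshQ_pos hq0 (by linarith)
  have hE : 0 ≤ (Real.cosh (t/2) - 1 + q0) ^ (p' + (d:ℝ)) := (Real.rpow_pos_of_pos hQ _).le
  apply list_sum_bound _ _ _ _ hE
  intro a ha
  rcases eq_or_ne a.2.2.2 0 with hr | hr
  · obtain ⟨i,j,k,r⟩ := a
    simp only at hr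
    subst hr
    simp only [tval, abs_nonneg, abs_zero, zero_mul, abs_mul]
    simp [hE]
  · have heq := hL a ha hr
    obtain ⟨i,j,k,r⟩ := a
    simp only at hr heq ⊢
    have hs0 : 0 ≤ Real.sinh (t/2) := sinh_t_nonneg (by linarith)
    have hc0 : 0 ≤ Real.cosh (t/2) := (Real.cosh_pos (t/2)).le
    have habs : |tval p' q0 (i,j,k,r) t| = |r| * Real.sinh (t/2)^i * Real.cosh (t/2)^j
        * (Real.cosh (t/2) - 1 + q0) ^ (p' - (k:ℝ)) := by
      unfold tval
      rw [abs_mul, abs_mul, abs_mul, abs_pow, abs_pow, abs_of_nonneg hs0, abs_of_nonneg hc0,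
        abs_of_pos (Real.rpow_pos_of_pos hQ _)]
    rw [habs]
    have b1 : Real.sinh (t/2)^i ≤ (10 * (Real.cosh (t/2) - 1 + q0))^i :=
      pow_le_pow_left₀ hs0 (sinh_le_10Q ht hq0) i
    have b2 : Real.cosh (t/2)^j ≤ (10 * (Real.cosh (t/2) - 1 + q0))^j :=
      pow_le_pow_left₀ hc0 (cosh_le_10Q ht hq0) j
    have step1 : |r| * Real.sinh (t/2)^i * Real.cosh (t/2)^j
          * (Real.cosh (t/2) - 1 + q0) ^ (p' - (k:ℝ))
        ≤ |r| * (10 * (Real.cosh (t/2) - 1 + q0))^i * (10 * (Real.cosh (t/2) - 1 + q0))^j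
          * (Real.cosh (t/2) - 1 + q0) ^ (p' - (k:ℝ)) :=
      mul_le_mul4 le_rfl b1 b2 (pow_nonneg hs0 _) (pow_nonneg hc0 _)
        (Real.rpow_pos_of_pos hQ _).le (abs_nonneg _) (by positivity)
    refine step1.trans (le_of_eq ?_)
    rw [mul_pow, mul_pow]
    have e1 : (Real.cosh (t/2) - 1 + q0)^i * (Real.cosh (t/2) - 1 + q0)^j
        = (Real.cosh (t/2) - 1 + q0) ^ ((i+j:ℕ):ℝ) := by
      rw [← pow_add, Real.rpow_natCast]
    have e2 : (Real.cosh (t/2) - 1 + q0) ^ ((i+j:ℕ):ℝ)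
          * (Real.cosh (t/2) - 1 + q0) ^ (p' - (k:ℝ))
        = (Real.cosh (t/2) - 1 + q0) ^ (p' + (d:ℝ)) := by
      rw [← Real.rpow_add hQ]
      congr 1
      have : ((i+j:ℕ):ℝ) = (d:ℝ) + (k:ℝ) := by exact_mod_cast congrArg (Nat.cast (R := ℝ)) heq
      linarith
    calc |r| * (10^i * (Real.cosh (t/2) - 1 + q0)^i) * (10^j * (Real.cosh (t/2) - 1 + q0)^j)
          * (Real.cosh (t/2) - 1 + q0) ^ (p' - (k:ℝ))
        = (|r| * (10^i*10^j)) * ((Real.cosh (t/2) - 1 + q0)^i * (Real.cosh (t/2) - 1 + q0)^j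
          * (Real.cosh (t/2) - 1 + q0) ^ (p' - (k:ℝ))) := by ring
    _ = (|r| * 10^(i+j)) * ((Real.cosh (t/2) - 1 + q0) ^ (p' + (d:ℝ))) := by
        rw [e1, e2, pow_add]
    _ = |r| * 10^(i+j) * (Real.cosh (t/2) - 1 + q0) ^ (p' + (d:ℝ)) := by ring

/-! ### representation of PhiDer -/

lemma PhiDer_rep (α β : ℝ) (M N : ℕ) {θ φ u v t : ℝ}
    (hu : u ∈ Icc (-1:ℝ) 1) (hv : v ∈ Icc (-1:ℝ) 1) (ht : 0 < t) :
    PhiDer α β M N t θ φ u v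
      = ((tlist (-(α+β+2)) M [(1,0,0,1)]).map (fun a =>
          (a.2.2.2 * Real.sinh (t/2) ^ a.1 * Real.cosh (t/2) ^ a.2.1) *
          osum (-(α+β+2) - (a.2.2.1:ℝ)) (Real.cosh (t/2) - 1) φ u v
            (olist (-(α+β+2) - (a.2.2.1:ℝ)) N [(0,0,0,1)]) θ)).sum := by
  have hC0 : 0 < Real.cosh (t/2) - 1 := by
    have := Real.one_lt_cosh.mpr (show t/2 ≠ 0 by positivity)
    linarith
  have h1 : PhiDer α β M N t θ φ u v = iteratedDeriv N (fun x =>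
      (List.map (fun a => tval (-(α+β+2)) (qK x φ u v) a t)
        (tlist (-(α+β+2)) M [(1,0,0,1)])).sum) θ := by
    unfold PhiDer
    congr 1
    funext x
    have h0 : 0 ≤ qK x φ u v := qK_nonneg' hu.1 hu.2 hv.1 hv.2 x φ
    have hfun : (fun s => Real.sinh (s/2) * (Real.cosh (s/2) - 1 + qK x φ u v) ^ (-(α+β+2)))
        = tsm (-(α+β+2)) (qK x φ u v) [(1,0,0,1)] := by
      funext s
      simp [tsm, tval]
    rw [hfun, teval _ _ h0 _ M t ht]
    rfl
  have hF : ∀ a ∈ tlist (-(α+β+2)) M [(1,0,0,1)],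
      ContDiff ℝ (⊤:ℕ∞) (fun x => tval (-(α+β+2)) (qK x φ u v) a t) := by
    intro a _
    exact contDiff_const.mul
      (contDiff_obase (-(α+β+2) - (a.2.2.1:ℝ)) (Real.cosh (t/2) - 1) φ hC0 hu.1 hu.2 hv.1 hv.2)
  have h2 := itd_list_sum (tlist (-(α+β+2)) M [(1,0,0,1)])
    (fun a x => tval (-(α+β+2)) (qK x φ u v) a t) hF N θ
  have h3 : ∀ a ∈ tlist (-(α+β+2)) M [(1,0,0,1)],
      iteratedDeriv N (fun x => tval (-(α+β+2)) (qK x φ u v) a t) θ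
      = (a.2.2.2 * Real.sinh (t/2) ^ a.1 * Real.cosh (t/2) ^ a.2.1) *
          osum (-(α+β+2) - (a.2.2.1:ℝ)) (Real.cosh (t/2) - 1) φ u v
            (olist (-(α+β+2) - (a.2.2.1:ℝ)) N [(0,0,0,1)]) θ := by
    intro a _
    have hbase := contDiff_obase (-(α+β+2) - (a.2.2.1:ℝ)) (Real.cosh (t/2) - 1) φ hC0
      hu.1 hu.2 hv.1 hv.2
    have hc := itd_const_mul hbase
      (a.2.2.2 * Real.sinh (t/2) ^ a.1 * Real.cosh (t/2) ^ a.2.1) N θ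
    have hosum : iteratedDeriv N
        (fun x => (Real.cosh (t/2) - 1 + qK x φ u v) ^ (-(α+β+2) - (a.2.2.1:ℝ))) θ
        = osum (-(α+β+2) - (a.2.2.1:ℝ)) (Real.cosh (t/2) - 1) φ u v
            (olist (-(α+β+2) - (a.2.2.1:ℝ)) N [(0,0,0,1)]) θ := by
      have he : (fun x => (Real.cosh (t/2) - 1 + qK x φ u v) ^ (-(α+β+2) - (a.2.2.1:ℝ)))
          = osum (-(α+β+2) - (a.2.2.1:ℝ)) (Real.cosh (t/2) - 1) φ u v [(0,0,0,1)] := by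
        funext x
        simp [osum, oval]
      rw [he, oeval _ _ _ _ _ hC0 hu.1 hu.2 hv.1 hv.2]
    exact hc.trans (by rw [hosum])
  have h4 := congrArg List.sum (List.map_congr_left h3)
  exact h1.trans (h2.trans h4)

lemma PhiDer_zero (α β : ℝ) (M : ℕ) (t θ φ u v : ℝ) :
    PhiDer α β M 0 t θ φ u v = iteratedDeriv M
      (fun s => Real.sinh (s/2) * (Real.cosh (s/2) - 1 + qK θ φ u v) ^ (-(α+β+2))) t := by
  unfold PhiDer
  rw [iteratedDeriv_zero]

/-! ### the derivative identity for case (iv) -/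

lemma derivPhi {q0 : ℝ} (hq0 : 0 ≤ q0) {s : ℝ} (hs : 0 < s) :
    deriv (fun s' => Real.sinh (s'/2) * (Real.cosh (s'/2) - 1 + q0) ^ (-(1:ℝ))) s
      = ((q0 - 1) * Real.cosh (s/2) + 1) / 2 * (Real.cosh (s/2) - 1 + q0) ^ (-(2:ℝ)) := by
  have hQpos : 0 < Real.cosh (s/2) - 1 + q0 := coshQ_pos hq0 hs
  have hhalf : HasDerivAt (fun y : ℝ => y/2) (1/2) s := (hasDerivAt_id s).div_const 2
  have hsin : HasDerivAt (fun y : ℝ => Real.sinh (y/2)) (Real.cosh (s/2) * (1/2)) s := by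
    simpa [Function.comp_def] using (Real.hasDerivAt_sinh (s/2)).comp s hhalf
  have hcos : HasDerivAt (fun y : ℝ => Real.cosh (y/2)) (Real.sinh (s/2) * (1/2)) s := by
    simpa [Function.comp_def] using (Real.hasDerivAt_cosh (s/2)).comp s hhalf
  have hQ : HasDerivAt (fun y : ℝ => Real.cosh (y/2) - 1 + q0) (Real.sinh (s/2) * (1/2)) s := by
    simpa using (hcos.sub_const 1).add_const q0
  have hP : HasDerivAt (fun y : ℝ => (Real.cosh (y/2) - 1 + q0) ^ (-(1:ℝ)))
      (Real.sinh (s/2) * (1/2) * (-(1:ℝ)) * (Real.cosh (s/2) - 1 + q0) ^ (-(1:ℝ) - 1)) s :=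
    hQ.rpow_const (Or.inl hQpos.ne')
  have H := hsin.mul hP
  replace H : HasDerivAt (fun s' => Real.sinh (s'/2) * (Real.cosh (s'/2) - 1 + q0) ^ (-(1:ℝ))) _ s := H
  rw [H.deriv]
  rw [show (-(1:ℝ) - 1) = (-(2:ℝ)) by norm_num]
  have hid : (Real.cosh (s/2) - 1 + q0) ^ (-(1:ℝ))
      = (Real.cosh (s/2) - 1 + q0) ^ (-(2:ℝ)) * (Real.cosh (s/2) - 1 + q0) := by
    rw [show (-(1:ℝ)) = -(2:ℝ) + 1 by norm_num, Real.rpow_add hQpos, Real.rpow_one]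
  rw [hid]
  have hpyth := Real.cosh_sq_sub_sinh_sq (s/2)
  nlinarith [hpyth, sq_nonneg (Real.cosh (s/2) - 1 + q0),
    Real.rpow_pos_of_pos hQpos (-(2:ℝ))]

lemma mul_le_mul4' {a a' b b' c c' d d' : ℝ} (ha : a ≤ a') (hb : b ≤ b') (hc : c ≤ c')
    (hd : d ≤ d') (h0b : 0 ≤ b) (h0c : 0 ≤ c) (h0d : 0 ≤ d) (h0a' : 0 ≤ a') (h0b' : 0 ≤ b')
    (h0c' : 0 ≤ c') :
    a * b * c * d ≤ a' * b' * c' * d' := by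
  apply mul_le_mul (mul_le_mul (mul_le_mul ha hb h0b h0a') hc h0c (mul_nonneg h0a' h0b')) hd h0d
  exact mul_nonneg (mul_nonneg h0a' h0b') h0c'

lemma regime_i (α β : ℝ) (M N : ℕ) (Cf : ℕ → ℝ) (hCf1 : ∀ k, 0 < Cf k)
    (hCf2 : ∀ k : ℕ, ∀ θ φ u v C0 : ℝ, θ ∈ Ioo 0 π → φ ∈ Ioo 0 π →
      u ∈ Icc (-1:ℝ) 1 → v ∈ Icc (-1:ℝ) 1 → 0 < C0 →
      (C0 + qK θ φ u v ≤ 3 →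
        |osum (-(α+β+2) - (k:ℝ)) C0 φ u v (olist (-(α+β+2) - (k:ℝ)) N [(0,0,0,1)]) θ|
          ≤ Cf k * (C0 + qK θ φ u v) ^ ((-(α+β+2) - (k:ℝ)) - N/2)))
    {θ φ u v t : ℝ} (hθ : θ ∈ Ioo 0 π) (hφ : φ ∈ Ioo 0 π)
    (hu : u ∈ Icc (-1:ℝ) 1) (hv : v ∈ Icc (-1:ℝ) 1) (ht : 0 < t) (ht1 : t ≤ 1) :
    |PhiDer α β M N t θ φ u v|
      ≤ (((tlist (-(α+β+2)) M [(1,0,0,1)]).map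
          (fun a => (|a.2.2.2| * 2^a.1 * 2^a.2.1 * 3^(a.1+M)) * Cf a.2.2.1)).sum)
        * (Real.cosh (t/2) - 1 + qK θ φ u v) ^ (-(α + β + 3/2 + ((M:ℝ) + N)/2)) := by
  have hq0 : 0 ≤ qK θ φ u v := qK_nonneg' hu.1 hu.2 hv.1 hv.2 θ φ
  have hq2 : qK θ φ u v ≤ 2 := qK_le_two' hu hv θ φ
  have hQ : 0 < Real.cosh (t/2) - 1 + qK θ φ u v := coshQ_pos hq0 ht
  have hC0 : 0 < Real.cosh (t/2) - 1 := by
    have := Real.one_lt_cosh.mpr (show t/2 ≠ 0 by positivity); linarith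
  have hc2 : Real.cosh (t/2) ≤ 2 := cosh_t_le ht ht1
  have hQ3 : Real.cosh (t/2) - 1 + qK θ φ u v ≤ 3 := by linarith
  have hE : 0 ≤ (Real.cosh (t/2) - 1 + qK θ φ u v) ^ (-(α + β + 3/2 + ((M:ℝ) + N)/2)) :=
    (Real.rpow_pos_of_pos hQ _).le
  have hsh : Real.sinh (t/2) ≤ 2 * Real.sqrt (Real.cosh (t/2) - 1 + qK θ φ u v) :=
    sinh_le_sqrtQ ht ht1 hq0
  have hs0 : 0 ≤ Real.sinh (t/2) := sinh_t_nonneg ht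
  have hc0 : 0 ≤ Real.cosh (t/2) := (Real.cosh_pos (t/2)).le
  rw [PhiDer_rep α β M N hu hv ht]
  have key : ∀ a ∈ tlist (-(α+β+2)) M [(1,0,0,1)],
      |(a.2.2.2 * Real.sinh (t/2) ^ a.1 * Real.cosh (t/2) ^ a.2.1) *
        osum (-(α+β+2) - (a.2.2.1:ℝ)) (Real.cosh (t/2) - 1) φ u v
          (olist (-(α+β+2) - (a.2.2.1:ℝ)) N [(0,0,0,1)]) θ|
      ≤ ((|a.2.2.2| * 2^a.1 * 2^a.2.1 * 3^(a.1+M)) * Cf a.2.2.1)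
        * (Real.cosh (t/2) - 1 + qK θ φ u v) ^ (-(α + β + 3/2 + ((M:ℝ) + N)/2)) := by
    intro a ha
    rcases eq_or_ne a.2.2.2 0 with hr | hr
    · simp only [hr, zero_mul, abs_zero, mul_zero, le_refl]
    · obtain ⟨b, hb, -, heq, hle⟩ := tinv (-(α+β+2)) [(1,0,0,1)] M a ha hr
      rw [List.mem_singleton] at hb
      subst hb
      obtain ⟨i,j,k,r⟩ := a
      simp only at hr heq hle ⊢
      -- heq : i + j + 0 = 1 + 0 + k ; hle : 1 + 2*k ≤ i + 2*0 + M
      have hOa := (hCf2 k θ φ u v (Real.cosh (t/2) - 1) hθ hφ hu hv hC0) hQ3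
      have babs : |r * Real.sinh (t/2) ^ i * Real.cosh (t/2) ^ j *
          osum (-(α+β+2) - (k:ℝ)) (Real.cosh (t/2) - 1) φ u v
            (olist (-(α+β+2) - (k:ℝ)) N [(0,0,0,1)]) θ|
          = |r| * Real.sinh (t/2)^i * Real.cosh (t/2)^j *
            |osum (-(α+β+2) - (k:ℝ)) (Real.cosh (t/2) - 1) φ u v
              (olist (-(α+β+2) - (k:ℝ)) N [(0,0,0,1)]) θ| := by
        rw [abs_mul, abs_mul, abs_mul, abs_pow, abs_pow, abs_of_nonneg hs0, abs_of_nonneg hc0]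
      rw [babs]
      have b1 : Real.sinh (t/2)^i
          ≤ 2^i * (Real.cosh (t/2) - 1 + qK θ φ u v) ^ ((i:ℝ)/2) := by
        calc Real.sinh (t/2)^i
            ≤ (2 * Real.sqrt (Real.cosh (t/2) - 1 + qK θ φ u v))^i :=
              pow_le_pow_left₀ hs0 hsh i
        _ = 2^i * (Real.cosh (t/2) - 1 + qK θ φ u v) ^ ((i:ℝ)/2) := by
              rw [mul_pow, sqrt_pow_eq hQ.le]
      have b2 : Real.cosh (t/2)^j ≤ 2^j := pow_le_pow_left₀ hc0 hc2 j
      have step1 := mul_le_mul4' (le_refl |r|) b1 b2 hOa (pow_nonneg hs0 _) (pow_nonneg hc0 _)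
        (abs_nonneg _) (abs_nonneg _) (by positivity) (by positivity)
      refine step1.trans ?_
      have e1 : |r| * (2^i * (Real.cosh (t/2) - 1 + qK θ φ u v) ^ ((i:ℝ)/2)) * 2^j
            * (Cf k * (Real.cosh (t/2) - 1 + qK θ φ u v) ^ ((-(α+β+2) - (k:ℝ)) - N/2))
          = (|r| * 2^i * 2^j * Cf k) * ((Real.cosh (t/2) - 1 + qK θ φ u v)
              ^ ((i:ℝ)/2 + ((-(α+β+2) - (k:ℝ)) - N/2))) := by
        rw [Real.rpow_add hQ]
        ring
      rw [e1]
      have hleR : (1:ℝ) + 2*(k:ℝ) ≤ (i:ℝ) + (M:ℝ) := by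
        have := (Nat.cast_le (α := ℝ)).mpr hle
        push_cast at this
        linarith
      have hk0 : (0:ℝ) ≤ (k:ℝ) := Nat.cast_nonneg k
      have step2 : (Real.cosh (t/2) - 1 + qK θ φ u v)
            ^ ((i:ℝ)/2 + ((-(α+β+2) - (k:ℝ)) - N/2))
          ≤ 3^(i+M) * (Real.cosh (t/2) - 1 + qK θ φ u v)
            ^ (-(α + β + 3/2 + ((M:ℝ) + N)/2)) := by
        apply key_hi hQ hQ3 (by norm_num) (i+M) (by push_cast; linarith) (by push_cast; linarith)
      calc (|r| * 2^i * 2^j * Cf k) * ((Real.cosh (t/2) - 1 + qK θ φ u v)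
              ^ ((i:ℝ)/2 + ((-(α+β+2) - (k:ℝ)) - N/2)))
          ≤ (|r| * 2^i * 2^j * Cf k) * (3^(i+M) * (Real.cosh (t/2) - 1 + qK θ φ u v)
              ^ (-(α + β + 3/2 + ((M:ℝ) + N)/2))) := by
            apply mul_le_mul_of_nonneg_left step2
            have := (hCf1 k).le
            positivity
      _ = ((|r| * 2^i * 2^j * 3^(i+M)) * Cf k) * (Real.cosh (t/2) - 1 + qK θ φ u v)
              ^ (-(α + β + 3/2 + ((M:ℝ) + N)/2)) := by ring
  exact list_sum_bound _ _ _ _ hE key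

lemma regime_ii (α β : ℝ) (M N : ℕ) (hN : 1 ≤ N) (Cf : ℕ → ℝ) (hCf1 : ∀ k, 0 < Cf k)
    (hCf2 : ∀ k : ℕ, ∀ θ φ u v C0 : ℝ, θ ∈ Ioo 0 π → φ ∈ Ioo 0 π →
      u ∈ Icc (-1:ℝ) 1 → v ∈ Icc (-1:ℝ) 1 → 0 < C0 →
      (1/9 ≤ C0 → 1 ≤ N →
        |osum (-(α+β+2) - (k:ℝ)) C0 φ u v (olist (-(α+β+2) - (k:ℝ)) N [(0,0,0,1)]) θ|
          ≤ Cf k * (C0 + qK θ φ u v) ^ ((-(α+β+2) - (k:ℝ)) - 1)))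
    {θ φ u v t : ℝ} (hθ : θ ∈ Ioo 0 π) (hφ : φ ∈ Ioo 0 π)
    (hu : u ∈ Icc (-1:ℝ) 1) (hv : v ∈ Icc (-1:ℝ) 1) (ht : 1 < t) :
    |PhiDer α β M N t θ φ u v|
      ≤ (((tlist (-(α+β+2)) M [(1,0,0,1)]).map
          (fun a => (|a.2.2.2| * 10^(a.1+a.2.1) * 9) * Cf a.2.2.1)).sum)
        * (Real.cosh (t/2) - 1 + qK θ φ u v) ^ (-(α + β + 3/2)) := by
  have ht0 : 0 < t := by linarith
  have hq0 : 0 ≤ qK θ φ u v := qK_nonneg' hu.1 hu.2 hv.1 hv.2 θ φ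
  have hQ : 0 < Real.cosh (t/2) - 1 + qK θ φ u v := coshQ_pos hq0 ht0
  have hC0 : 0 < Real.cosh (t/2) - 1 := by
    have := Real.one_lt_cosh.mpr (show t/2 ≠ 0 by positivity); linarith
  have hcg := cosh_t_ge ht
  have h19 : (1:ℝ)/9 ≤ Real.cosh (t/2) - 1 := by linarith
  have h19Q : (1:ℝ)/9 ≤ Real.cosh (t/2) - 1 + qK θ φ u v := by linarith
  have hE : 0 ≤ (Real.cosh (t/2) - 1 + qK θ φ u v) ^ (-(α + β + 3/2)) :=
    (Real.rpow_pos_of_pos hQ _).le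
  have hs0 : 0 ≤ Real.sinh (t/2) := sinh_t_nonneg ht0
  have hc0 : 0 ≤ Real.cosh (t/2) := (Real.cosh_pos (t/2)).le
  rw [PhiDer_rep α β M N hu hv ht0]
  have key : ∀ a ∈ tlist (-(α+β+2)) M [(1,0,0,1)],
      |(a.2.2.2 * Real.sinh (t/2) ^ a.1 * Real.cosh (t/2) ^ a.2.1) *
        osum (-(α+β+2) - (a.2.2.1:ℝ)) (Real.cosh (t/2) - 1) φ u v
          (olist (-(α+β+2) - (a.2.2.1:ℝ)) N [(0,0,0,1)]) θ|
      ≤ ((|a.2.2.2| * 10^(a.1+a.2.1) * 9) * Cf a.2.2.1)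
        * (Real.cosh (t/2) - 1 + qK θ φ u v) ^ (-(α + β + 3/2)) := by
    intro a ha
    rcases eq_or_ne a.2.2.2 0 with hr | hr
    · simp only [hr, zero_mul, abs_zero, mul_zero, le_refl]
    · obtain ⟨b, hb, -, heq, -⟩ := tinv (-(α+β+2)) [(1,0,0,1)] M a ha hr
      rw [List.mem_singleton] at hb
      subst hb
      obtain ⟨i,j,k,r⟩ := a
      simp only at hr heq ⊢
      -- heq : i + j + 0 = 1 + 0 + k
      have hOa := (hCf2 k θ φ u v (Real.cosh (t/2) - 1) hθ hφ hu hv hC0) h19 hN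
      have babs : |r * Real.sinh (t/2) ^ i * Real.cosh (t/2) ^ j *
          osum (-(α+β+2) - (k:ℝ)) (Real.cosh (t/2) - 1) φ u v
            (olist (-(α+β+2) - (k:ℝ)) N [(0,0,0,1)]) θ|
          = |r| * Real.sinh (t/2)^i * Real.cosh (t/2)^j *
            |osum (-(α+β+2) - (k:ℝ)) (Real.cosh (t/2) - 1) φ u v
              (olist (-(α+β+2) - (k:ℝ)) N [(0,0,0,1)]) θ| := by
        rw [abs_mul, abs_mul, abs_mul, abs_pow, abs_pow, abs_of_nonneg hs0, abs_of_nonneg hc0]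
      rw [babs]
      have b1 : Real.sinh (t/2)^i ≤ (10 * (Real.cosh (t/2) - 1 + qK θ φ u v))^i :=
        pow_le_pow_left₀ hs0 (sinh_le_10Q ht hq0) i
      have b2 : Real.cosh (t/2)^j ≤ (10 * (Real.cosh (t/2) - 1 + qK θ φ u v))^j :=
        pow_le_pow_left₀ hc0 (cosh_le_10Q ht hq0) j
      have step1 := mul_le_mul4' (le_refl |r|) b1 b2 hOa (pow_nonneg hs0 _) (pow_nonneg hc0 _)
        (abs_nonneg _) (abs_nonneg _) (by positivity) (by positivity)
      refine step1.trans ?_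
      have e0 : (Real.cosh (t/2) - 1 + qK θ φ u v)^i * (Real.cosh (t/2) - 1 + qK θ φ u v)^j
            * (Real.cosh (t/2) - 1 + qK θ φ u v) ^ ((-(α+β+2) - (k:ℝ)) - 1)
          = (Real.cosh (t/2) - 1 + qK θ φ u v) ^ (-(α+β+2)) := by
        rw [← pow_add, ← Real.rpow_natCast _ (i+j), ← Real.rpow_add hQ]
        congr 1
        have : ((i+j:ℕ):ℝ) = 1 + (k:ℝ) := by exact_mod_cast congrArg (Nat.cast (R := ℝ)) heq
        linarith
      have e1 : |r| * (10 * (Real.cosh (t/2) - 1 + qK θ φ u v))^i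
            * (10 * (Real.cosh (t/2) - 1 + qK θ φ u v))^j
            * (Cf k * (Real.cosh (t/2) - 1 + qK θ φ u v) ^ ((-(α+β+2) - (k:ℝ)) - 1))
          = (|r| * 10^(i+j) * Cf k) * ((Real.cosh (t/2) - 1 + qK θ φ u v) ^ (-(α+β+2))) := by
        rw [mul_pow, mul_pow, ← e0, pow_add]
        ring
      rw [e1]
      have step2 : (Real.cosh (t/2) - 1 + qK θ φ u v) ^ (-(α+β+2))
          ≤ 9 * (Real.cosh (t/2) - 1 + qK θ φ u v) ^ (-(α + β + 3/2)) := by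
        have h := key_lo (show (0:ℝ) < 1/9 by norm_num) h19Q (by norm_num) 1
          (show -(α+β+2) ≤ -(α+β+3/2) by linarith)
          (by push_cast; linarith)
        rwa [show ((1:ℝ)/9)⁻¹ ^ (1:ℕ) = 9 by norm_num] at h
      calc (|r| * 10^(i+j) * Cf k) * ((Real.cosh (t/2) - 1 + qK θ φ u v) ^ (-(α+β+2)))
          ≤ (|r| * 10^(i+j) * Cf k) * (9 * (Real.cosh (t/2) - 1 + qK θ φ u v)
              ^ (-(α + β + 3/2))) := by
            apply mul_le_mul_of_nonneg_left step2
            have := (hCf1 k).le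
            positivity
      _ = ((|r| * 10^(i+j) * 9) * Cf k) * (Real.cosh (t/2) - 1 + qK θ φ u v)
              ^ (-(α + β + 3/2)) := by ring
  exact list_sum_bound _ _ _ _ hE key

end St17

open St17 in
theorem stmt17 (α β : ℝ) (hα : -(1/2) ≤ α) (hβ : -(1/2) ≤ β) (M N : ℕ) :
    ∃ C : ℝ, 0 < C ∧ ∀ θ φ u v t : ℝ, θ ∈ Ioo 0 π → φ ∈ Ioo 0 π →
      u ∈ Icc (-1 : ℝ) 1 → v ∈ Icc (-1 : ℝ) 1 → 0 < t →
      (t ≤ 1 →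
        |PhiDer α β M N t θ φ u v|
          ≤ C * (Real.cosh (t / 2) - 1 + qK θ φ u v)
              ^ (-(α + β + 3/2 + ((M : ℝ) + N) / 2))) ∧
      (1 < t → 1 ≤ N →
        |PhiDer α β M N t θ φ u v|
          ≤ C * (Real.cosh (t / 2) - 1 + qK θ φ u v) ^ (-(α + β + 3/2))) ∧
      (1 < t → N = 0 →
        |PhiDer α β M N t θ φ u v|
          ≤ C * (Real.cosh (t / 2) - 1 + qK θ φ u v) ^ (-(α + β + 1))) ∧
      (1 < t → N = 0 → 1 ≤ M → α + β = -1 →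
        |PhiDer α β M N t θ φ u v|
          ≤ C * (Real.cosh (t / 2) - 1 + qK θ φ u v) ^ (-(1 : ℝ))) := by
  obtain ⟨Cf, hCf1, hCf2⟩ :
      ∃ Cf : ℕ → ℝ, (∀ k, 0 < Cf k) ∧ ∀ k : ℕ, ∀ θ φ u v C0 : ℝ,
        θ ∈ Ioo 0 π → φ ∈ Ioo 0 π → u ∈ Icc (-1:ℝ) 1 → v ∈ Icc (-1:ℝ) 1 → 0 < C0 →
        ((C0 + qK θ φ u v ≤ 3 →
          |osum (-(α+β+2) - (k:ℝ)) C0 φ u v (olist (-(α+β+2) - (k:ℝ)) N [(0,0,0,1)]) θ|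
            ≤ Cf k * (C0 + qK θ φ u v) ^ ((-(α+β+2) - (k:ℝ)) - N/2)) ∧
         (1/9 ≤ C0 → 1 ≤ N →
          |osum (-(α+β+2) - (k:ℝ)) C0 φ u v (olist (-(α+β+2) - (k:ℝ)) N [(0,0,0,1)]) θ|
            ≤ Cf k * (C0 + qK θ φ u v) ^ ((-(α+β+2) - (k:ℝ)) - 1))) := by
    have h := fun k : ℕ => OB (-(α+β+2) - (k:ℝ)) N
    choose Cf h1 h2 using h
    exact ⟨Cf, h1, h2⟩
  have hSI0 : 0 ≤ (((tlist (-(α+β+2)) M [(1,0,0,1)]).map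
      (fun a => (|a.2.2.2| * 2^a.1 * 2^a.2.1 * 3^(a.1+M)) * Cf a.2.2.1)).sum) :=
    list_sum_nonneg' _ _ (fun a _ => mul_nonneg (by positivity) (hCf1 _).le)
  have hSII0 : 0 ≤ (((tlist (-(α+β+2)) M [(1,0,0,1)]).map
      (fun a => (|a.2.2.2| * 10^(a.1+a.2.1) * 9) * Cf a.2.2.1)).sum) :=
    list_sum_nonneg' _ _ (fun a _ => mul_nonneg (by positivity) (hCf1 _).le)
  have hSIII0 : 0 ≤ (((tlist (-(α+β+2)) M [(1,0,0,1)]).map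
      (fun a => |a.2.2.2| * 10^(a.1+a.2.1))).sum) :=
    list_sum_nonneg' _ _ (fun a _ => by positivity)
  have hSA0 : 0 ≤ (((tlist (-2:ℝ) (M-1) [((0:ℕ),(1:ℕ),(0:ℕ),(1:ℝ)/2)]).map
      (fun a => |a.2.2.2| * 10^(a.1+a.2.1))).sum) :=
    list_sum_nonneg' _ _ (fun a _ => by positivity)
  have hSB0 : 0 ≤ (((tlist (-2:ℝ) (M-1) [((0:ℕ),(0:ℕ),(0:ℕ),(1:ℝ)/2)]).map
      (fun a => |a.2.2.2| * 10^(a.1+a.2.1))).sum) :=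
    list_sum_nonneg' _ _ (fun a _ => by positivity)
  refine ⟨1 + ((((tlist (-(α+β+2)) M [(1,0,0,1)]).map
        (fun a => (|a.2.2.2| * 2^a.1 * 2^a.2.1 * 3^(a.1+M)) * Cf a.2.2.1)).sum)
      + (((tlist (-(α+β+2)) M [(1,0,0,1)]).map
        (fun a => (|a.2.2.2| * 10^(a.1+a.2.1) * 9) * Cf a.2.2.1)).sum)
      + (((tlist (-(α+β+2)) M [(1,0,0,1)]).map
        (fun a => |a.2.2.2| * 10^(a.1+a.2.1))).sum)
      + ((((tlist (-2:ℝ) (M-1) [((0:ℕ),(1:ℕ),(0:ℕ),(1:ℝ)/2)]).map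
        (fun a => |a.2.2.2| * 10^(a.1+a.2.1))).sum)
        + 9 * (((tlist (-2:ℝ) (M-1) [((0:ℕ),(0:ℕ),(0:ℕ),(1:ℝ)/2)]).map
        (fun a => |a.2.2.2| * 10^(a.1+a.2.1))).sum))), by linarith, ?_⟩
  intro θ φ u v t hθ hφ hu hv ht
  have hq0 : 0 ≤ qK θ φ u v := qK_nonneg' hu.1 hu.2 hv.1 hv.2 θ φ
  have hq2 : qK θ φ u v ≤ 2 := qK_le_two' hu hv θ φ
  have hQ : 0 < Real.cosh (t/2) - 1 + qK θ φ u v := coshQ_pos hq0 ht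
  refine ⟨?_, ?_, ?_, ?_⟩
  · -- regime (i)
    intro ht1
    have h := regime_i α β M N Cf hCf1 (fun k θ φ u v C0 h1 h2 h3 h4 h5 =>
      (hCf2 k θ φ u v C0 h1 h2 h3 h4 h5).1) hθ hφ hu hv ht ht1
    refine h.trans ?_
    apply mul_le_mul_of_nonneg_right _ (Real.rpow_pos_of_pos hQ _).le
    linarith
  · -- regime (ii)
    intro ht1 hN
    have h := regime_ii α β M N hN Cf hCf1 (fun k θ φ u v C0 h1 h2 h3 h4 h5 =>
      (hCf2 k θ φ u v C0 h1 h2 h3 h4 h5).2) hθ hφ hu hv ht1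
    refine h.trans ?_
    apply mul_le_mul_of_nonneg_right _ (Real.rpow_pos_of_pos hQ _).le
    linarith
  · -- regime (iii)
    intro ht1 hN0
    subst hN0
    rw [PhiDer_zero]
    have hfun : (fun s => Real.sinh (s/2) * (Real.cosh (s/2) - 1 + qK θ φ u v) ^ (-(α+β+2)))
        = tsm (-(α+β+2)) (qK θ φ u v) [(1,0,0,1)] := by
      funext s
      simp [tsm, tval]
    rw [hfun, teval _ _ hq0 _ M t ht]
    have hL : ∀ a ∈ tlist (-(α+β+2)) M [((1:ℕ),(0:ℕ),(0:ℕ),(1:ℝ))], a.2.2.2 ≠ 0 →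
        a.1 + a.2.1 = 1 + a.2.2.1 := by
      intro a ha hr
      obtain ⟨b, hb, -, heq, -⟩ := tinv (-(α+β+2)) [(1,0,0,1)] M a ha hr
      rw [List.mem_singleton] at hb
      subst hb
      simp only at heq
      omega
    have h := tlarge_bound (-(α+β+2)) (qK θ φ u v) hq0 ht1 _ 1 hL
    rw [show (-(α+β+2)) + ((1:ℕ):ℝ) = -(α+β+1) by push_cast; ring] at h
    refine h.trans ?_
    apply mul_le_mul_of_nonneg_right _ (Real.rpow_pos_of_pos hQ _).le
    linarith
  · -- regime (iv)
    intro ht1 hN0 hM1 hαβ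
    subst hN0
    rw [PhiDer_zero]
    rw [show -(α+β+2) = -(1:ℝ) by rw [hαβ]; norm_num]
    obtain ⟨M', rfl⟩ : ∃ M', M = M' + 1 := ⟨M - 1, by omega⟩
    simp only [Nat.add_sub_cancel]
    rw [iteratedDeriv_succ']
    have hEqOn : Set.EqOn
        (deriv (fun s => Real.sinh (s/2) * (Real.cosh (s/2) - 1 + qK θ φ u v) ^ (-(1:ℝ))))
        (tsm (-2) (qK θ φ u v)
          [((0:ℕ),(1:ℕ),(0:ℕ),(qK θ φ u v - 1)*((1:ℝ)/2)), ((0:ℕ),(0:ℕ),(0:ℕ),(1:ℝ)/2)])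
        (Ioi 0) := by
      intro s hs
      rw [derivPhi hq0 hs]
      simp only [tsm, tval, List.map_cons, List.map_nil, List.sum_cons, List.sum_nil]
      push_cast
      ring_nf
    rw [hEqOn.iteratedDeriv_of_isOpen isOpen_Ioi M' (mem_Ioi.mpr ht)]
    rw [teval _ _ hq0 _ M' t ht]
    rw [show [((0:ℕ),(1:ℕ),(0:ℕ),(qK θ φ u v - 1)*((1:ℝ)/2)), ((0:ℕ),(0:ℕ),(0:ℕ),(1:ℝ)/2)]
        = [((0:ℕ),(1:ℕ),(0:ℕ),(qK θ φ u v - 1)*((1:ℝ)/2))] ++ [((0:ℕ),(0:ℕ),(0:ℕ),(1:ℝ)/2)]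
      from rfl]
    rw [tlist_append, tsum_append]
    rw [show [((0:ℕ),(1:ℕ),(0:ℕ),(qK θ φ u v - 1)*((1:ℝ)/2))]
        = [((0:ℕ),(1:ℕ),(0:ℕ),(1:ℝ)/2)].map (tscale (qK θ φ u v - 1)) from by
      simp [tscale]]
    rw [tlist_map_tscale, tsum_map_tscale]
    -- bounds
    have hLA : ∀ a ∈ tlist (-2:ℝ) M' [((0:ℕ),(1:ℕ),(0:ℕ),(1:ℝ)/2)], a.2.2.2 ≠ 0 →
        a.1 + a.2.1 = 1 + a.2.2.1 := by
      intro a ha hr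
      obtain ⟨b, hb, -, heq, -⟩ := tinv (-2:ℝ) [((0:ℕ),(1:ℕ),(0:ℕ),(1:ℝ)/2)] M' a ha hr
      rw [List.mem_singleton] at hb
      subst hb
      simp only at heq
      omega
    have hLB : ∀ a ∈ tlist (-2:ℝ) M' [((0:ℕ),(0:ℕ),(0:ℕ),(1:ℝ)/2)], a.2.2.2 ≠ 0 →
        a.1 + a.2.1 = 0 + a.2.2.1 := by
      intro a ha hr
      obtain ⟨b, hb, -, heq, -⟩ := tinv (-2:ℝ) [((0:ℕ),(0:ℕ),(0:ℕ),(1:ℝ)/2)] M' a ha hr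
      rw [List.mem_singleton] at hb
      subst hb
      simp only at heq
      omega
    have hA := tlarge_bound (-2:ℝ) (qK θ φ u v) hq0 ht1 _ 1 hLA
    have hB := tlarge_bound (-2:ℝ) (qK θ φ u v) hq0 ht1 _ 0 hLB
    rw [show ((-2:ℝ) + ((1:ℕ):ℝ)) = -(1:ℝ) by push_cast; ring] at hA
    rw [show ((-2:ℝ) + ((0:ℕ):ℝ)) = (-2:ℝ) by push_cast; ring] at hB
    have h19Q : (1:ℝ)/9 ≤ Real.cosh (t/2) - 1 + qK θ φ u v := by
      have := cosh_t_ge ht1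
      linarith
    have hBmono : (Real.cosh (t/2) - 1 + qK θ φ u v) ^ (-2:ℝ)
        ≤ 9 * (Real.cosh (t/2) - 1 + qK θ φ u v) ^ (-(1:ℝ)) := by
      have h := key_lo (show (0:ℝ) < 1/9 by norm_num) h19Q (by norm_num) 1
        (show (-2:ℝ) ≤ -(1:ℝ) by norm_num) (by push_cast; norm_num)
      rwa [show ((1:ℝ)/9)⁻¹ ^ (1:ℕ) = 9 by norm_num] at h
    have habsq : |qK θ φ u v - 1| ≤ 1 := abs_le.mpr ⟨by linarith, by linarith⟩
    have hE : 0 ≤ (Real.cosh (t/2) - 1 + qK θ φ u v) ^ (-(1:ℝ)) :=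
      (Real.rpow_pos_of_pos hQ _).le
    calc |(qK θ φ u v - 1) * tsm (-2) (qK θ φ u v)
            (tlist (-2:ℝ) M' [((0:ℕ),(1:ℕ),(0:ℕ),(1:ℝ)/2)]) t
          + tsm (-2) (qK θ φ u v) (tlist (-2:ℝ) M' [((0:ℕ),(0:ℕ),(0:ℕ),(1:ℝ)/2)]) t|
        ≤ |qK θ φ u v - 1| * |tsm (-2) (qK θ φ u v)
            (tlist (-2:ℝ) M' [((0:ℕ),(1:ℕ),(0:ℕ),(1:ℝ)/2)]) t|
          + |tsm (-2) (qK θ φ u v) (tlist (-2:ℝ) M' [((0:ℕ),(0:ℕ),(0:ℕ),(1:ℝ)/2)]) t| := by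
          refine (abs_add_le _ _).trans ?_
          rw [abs_mul]
    _ ≤ 1 * ((((tlist (-2:ℝ) M' [((0:ℕ),(1:ℕ),(0:ℕ),(1:ℝ)/2)]).map
            (fun a => |a.2.2.2| * 10^(a.1+a.2.1))).sum)
            * (Real.cosh (t/2) - 1 + qK θ φ u v) ^ (-(1:ℝ)))
          + (((tlist (-2:ℝ) M' [((0:ℕ),(0:ℕ),(0:ℕ),(1:ℝ)/2)]).map
            (fun a => |a.2.2.2| * 10^(a.1+a.2.1))).sum)
            * (Real.cosh (t/2) - 1 + qK θ φ u v) ^ (-2:ℝ) := by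
          have h1 : 0 ≤ |tsm (-2) (qK θ φ u v)
              (tlist (-2:ℝ) M' [((0:ℕ),(1:ℕ),(0:ℕ),(1:ℝ)/2)]) t| := abs_nonneg _
          have hm1 := mul_le_mul habsq hA h1 zero_le_one
          linarith [hB]
    _ ≤ ((((tlist (-2:ℝ) M' [((0:ℕ),(1:ℕ),(0:ℕ),(1:ℝ)/2)]).map
            (fun a => |a.2.2.2| * 10^(a.1+a.2.1))).sum)
          + 9 * (((tlist (-2:ℝ) M' [((0:ℕ),(0:ℕ),(0:ℕ),(1:ℝ)/2)]).map
            (fun a => |a.2.2.2| * 10^(a.1+a.2.1))).sum))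
          * (Real.cosh (t/2) - 1 + qK θ φ u v) ^ (-(1:ℝ)) := by
          have h2 := mul_le_mul_of_nonneg_left hBmono
            (list_sum_nonneg' (tlist (-2:ℝ) M' [((0:ℕ),(0:ℕ),(0:ℕ),(1:ℝ)/2)])
              (fun a => |a.2.2.2| * 10^(a.1+a.2.1)) (fun a _ => by positivity))
          linarith [h2]
    _ ≤ _ := by
          apply mul_le_mul_of_nonneg_right _ hE
          have hg1 : 0 ≤ (((tlist (-1:ℝ) (M'+1) [(1,0,0,1)]).map
              (fun a => (|a.2.2.2| * 2^a.1 * 2^a.2.1 * 3^(a.1+(M'+1))) * Cf a.2.2.1)).sum) :=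
            list_sum_nonneg' _ _ (fun a _ => mul_nonneg (by positivity) (hCf1 _).le)
          have hg2 : 0 ≤ (((tlist (-1:ℝ) (M'+1) [(1,0,0,1)]).map
              (fun a => (|a.2.2.2| * 10^(a.1+a.2.1) * 9) * Cf a.2.2.1)).sum) :=
            list_sum_nonneg' _ _ (fun a _ => mul_nonneg (by positivity) (hCf1 _).le)
          have hg3 : 0 ≤ (((tlist (-1:ℝ) (M'+1) [(1,0,0,1)]).map
              (fun a => |a.2.2.2| * 10^(a.1+a.2.1))).sum) :=
            list_sum_nonneg' _ _ (fun a _ => by positivity)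
          linarith
end

section
/- Let α, β ≥ -1/2 and let M, N ≥ 0 be integers. There exists a constant C = C(α,β,M,N) such that for all θ, φ ∈ (0,π), all u, v ∈ [-1,1] and all t > 0, writing ∂_φ ∂_θ^N ∂_t^M Φ for the partial derivative in φ of the N-th partial derivative in θ of the M-th partial derivative in t of Φ(t,θ,φ) = sinh(t/2) · (cosh(t/2) - 1 + q(θ,φ,u,v))^{-(α+β+2)}, and abbreviating Q = cosh(t/2) - 1 + q(θ,φ,u,v), one has: if 0 < t ≤ 1 then |∂_φ ∂_θ^N ∂_t^M Φ| ≤ C · Q^{-(α+β+2+(M+N)/2)}, and if t > 1 then |∂_φ ∂_θ^N ∂_t^M Φ| ≤ C · Q^{-(α+β+3/2)}. -/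
open Real MeasureTheory Set
open scoped ENNReal

/-- `∂_φ ∂_θ^N ∂_t^M Φ` where `Φ(t,θ,φ) = sinh(t/2)·(cosh(t/2) - 1 + q(θ,φ,u,v))^{-(α+β+2)}`. -/
noncomputable def PhiDerPhi (α β : ℝ) (M N : ℕ) (t θ φ u v : ℝ) : ℝ :=
  deriv (fun y => iteratedDeriv N (fun x => iteratedDeriv M
    (fun s => Real.sinh (s / 2) * (Real.cosh (s / 2) - 1 + qK x y u v) ^ (-(α + β + 2))) t) θ) φ

namespace Str18

noncomputable def ffn (k : ℕ) (x : ℝ) : ℝ := Real.sin (x / 2 + k * (π / 2))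

lemma ffn_zero (x : ℝ) : ffn 0 x = Real.sin (x / 2) := by simp [ffn]

lemma ffn_one (x : ℝ) : ffn 1 x = Real.cos (x / 2) := by
  simp [ffn, Real.sin_add_pi_div_two]

lemma ffn_two (x : ℝ) : ffn 2 x = -Real.sin (x / 2) := by
  have : (x / 2 + (2:ℕ) * (π / 2)) = (x/2 + π/2) + π/2 := by push_cast; ring
  rw [ffn, this, Real.sin_add_pi_div_two, Real.cos_add_pi_div_two]

lemma abs_ffn_le (k : ℕ) (x : ℝ) : |ffn k x| ≤ 1 := abs_le.2 ⟨Real.neg_one_le_sin _, Real.sin_le_one _⟩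

lemma ffn_hasDerivAt (k : ℕ) (x : ℝ) : HasDerivAt (ffn k) (1/2 * ffn (k+1) x) x := by
  have h : HasDerivAt (fun x : ℝ => x / 2 + k * (π / 2)) (1/2) x := by
    simpa using ((hasDerivAt_id x).div_const 2).add_const ((k:ℝ) * (π/2))
  have := (Real.hasDerivAt_sin (x / 2 + k * (π / 2))).comp x h
  have hf : ffn (k+1) x = Real.cos (x / 2 + k * (π/2)) := by
    rw [ffn, ← Real.sin_add_pi_div_two]; push_cast; ring_nf
  rw [hf]
  exact (by simpa [Function.comp_def, mul_comm] using this :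
    HasDerivAt (fun x => Real.sin (x / 2 + k * (π / 2))) (1/2 * Real.cos (x / 2 + k * (π/2))) x)

noncomputable def ggf (u v : ℝ) (k l : ℕ) (θ φ : ℝ) : ℝ :=
  u * (ffn k θ * ffn l φ) + v * (ffn (k+1) θ * ffn (l+1) φ)

lemma ggf_hasDerivAt_θ (u v : ℝ) (k l : ℕ) (θ φ : ℝ) :
    HasDerivAt (fun θ => ggf u v k l θ φ) (1/2 * ggf u v (k+1) l θ φ) θ := by
  have h1 := ((ffn_hasDerivAt k θ).mul_const (ffn l φ)).const_mul u
  have h2 := ((ffn_hasDerivAt (k+1) θ).mul_const (ffn (l+1) φ)).const_mul v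
  have := h1.fun_add h2
  simpa [ggf, mul_comm, mul_assoc, mul_left_comm, mul_add] using this

lemma ggf_hasDerivAt_φ (u v : ℝ) (k l : ℕ) (θ φ : ℝ) :
    HasDerivAt (fun φ => ggf u v k l θ φ) (1/2 * ggf u v k (l+1) θ φ) φ := by
  have h1 := ((ffn_hasDerivAt l φ).const_mul (ffn k θ)).const_mul u
  have h2 := ((ffn_hasDerivAt (l+1) φ).const_mul (ffn (k+1) θ)).const_mul v
  have := h1.fun_add h2
  simpa [ggf, mul_comm, mul_assoc, mul_left_comm, mul_add] using this

lemma abs_ggf_le {u v : ℝ} (hu : |u| ≤ 1) (hv : |v| ≤ 1) (k l : ℕ) (θ φ : ℝ) :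
    |ggf u v k l θ φ| ≤ 2 := by
  have h1 := abs_ffn_le k θ; have h2 := abs_ffn_le l φ
  have h3 := abs_ffn_le (k+1) θ; have h4 := abs_ffn_le (l+1) φ
  have e1 : |u * (ffn k θ * ffn l φ)| ≤ 1 := by
    rw [abs_mul, abs_mul]
    exact mul_le_one₀ hu (by positivity) (mul_le_one₀ (abs_ffn_le k θ) (abs_nonneg _) (abs_ffn_le l φ))
  have e2 : |v * (ffn (k+1) θ * ffn (l+1) φ)| ≤ 1 := by
    rw [abs_mul, abs_mul]
    exact mul_le_one₀ hv (by positivity) (mul_le_one₀ (abs_ffn_le _ θ) (abs_nonneg _) (abs_ffn_le _ φ))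
  calc |ggf u v k l θ φ| ≤ |u * (ffn k θ * ffn l φ)| + |v * (ffn (k+1) θ * ffn (l+1) φ)| :=
        abs_add_le _ _
    _ ≤ 2 := by linarith

lemma qK_eq (θ φ u v : ℝ) : qK θ φ u v = 1 - ggf u v 0 0 θ φ := by
  simp [qK, ggf, ffn_zero, ffn_one]; ring

lemma qK_nonneg {u v : ℝ} (hu : |u| ≤ 1) (hv : |v| ≤ 1) (θ φ : ℝ) : 0 ≤ qK θ φ u v := by
  have hs := Real.sin_sq_add_cos_sq (θ/2)
  have hs' := Real.sin_sq_add_cos_sq (φ/2)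
  rw [abs_le] at hu hv
  rw [qK]
  set s := Real.sin (θ/2); set c := Real.cos (θ/2)
  set s' := Real.sin (φ/2); set c' := Real.cos (φ/2)
  have hu2 : u^2 ≤ 1 := by nlinarith [hu.1, hu.2]
  have hv2 : v^2 ≤ 1 := by nlinarith [hv.1, hv.2]
  have key : (u*(c*s') - v*(s*c'))^2 + (u*(s*s') + v*(c*c'))^2 = u^2*s'^2 + v^2*c'^2 := by
    nlinarith [hs, hs']
  have hb : u^2*s'^2 + v^2*c'^2 ≤ 1 := by
    nlinarith [mul_nonneg (sub_nonneg.2 hu2) (sq_nonneg s'), mul_nonneg (sub_nonneg.2 hv2) (sq_nonneg c'), hs']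
  nlinarith [key, hb, sq_nonneg (u*(c*s') - v*(s*c')), sq_nonneg (1 - (u*(s*s') + v*(c*c')))]

lemma qK_le_two {u v : ℝ} (hu : |u| ≤ 1) (hv : |v| ≤ 1) (θ φ : ℝ) : qK θ φ u v ≤ 2 := by
  have h := qK_nonneg (u := -u) (v := -v) (by simpa using hu) (by simpa using hv) θ φ
  simp [qK] at h ⊢
  linarith

lemma sq_ggf10_le {u v : ℝ} (hu : |u| ≤ 1) (hv : |v| ≤ 1) (θ φ : ℝ) :
    (ggf u v 1 0 θ φ)^2 ≤ 2 * qK θ φ u v := by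
  have hs := Real.sin_sq_add_cos_sq (θ/2)
  have hs' := Real.sin_sq_add_cos_sq (φ/2)
  rw [abs_le] at hu hv
  rw [qK]
  have h2 : ggf u v 1 0 θ φ = u * (Real.cos (θ/2) * Real.sin (φ/2)) - v * (Real.sin (θ/2) * Real.cos (φ/2)) := by
    simp [ggf, ffn_zero, ffn_one, ffn_two]; ring
  rw [h2]
  set s := Real.sin (θ/2); set c := Real.cos (θ/2)
  set s' := Real.sin (φ/2); set c' := Real.cos (φ/2)
  have key : (u*(c*s') - v*(s*c'))^2 + (u*(s*s') + v*(c*c'))^2 = u^2*s'^2 + v^2*c'^2 := by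
    nlinarith [hs, hs']
  have hu2 : u^2 ≤ 1 := by nlinarith [hu.1, hu.2]
  have hv2 : v^2 ≤ 1 := by nlinarith [hv.1, hv.2]
  have hb : u^2*s'^2 + v^2*c'^2 ≤ 1 := by
    nlinarith [mul_nonneg (sub_nonneg.2 hu2) (sq_nonneg s'), mul_nonneg (sub_nonneg.2 hv2) (sq_nonneg c'), hs']
  nlinarith [key, hb, sq_nonneg (1 - (u*(s*s') + v*(c*c')))]

lemma sq_ggf01_le {u v : ℝ} (hu : |u| ≤ 1) (hv : |v| ≤ 1) (θ φ : ℝ) :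
    (ggf u v 0 1 θ φ)^2 ≤ 2 * qK θ φ u v := by
  have hs := Real.sin_sq_add_cos_sq (θ/2)
  have hs' := Real.sin_sq_add_cos_sq (φ/2)
  rw [abs_le] at hu hv
  rw [qK]
  have h2 : ggf u v 0 1 θ φ = u * (Real.sin (θ/2) * Real.cos (φ/2)) - v * (Real.cos (θ/2) * Real.sin (φ/2)) := by
    simp [ggf, ffn_zero, ffn_one, ffn_two]; ring
  rw [h2]
  set s := Real.sin (θ/2); set c := Real.cos (θ/2)
  set s' := Real.sin (φ/2); set c' := Real.cos (φ/2)
  have key : (u*(s*c') - v*(c*s'))^2 + (u*(s*s') + v*(c*c'))^2 = u^2*s^2 + v^2*c^2 := by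
    nlinarith [hs, hs']
  have hu2 : u^2 ≤ 1 := by nlinarith [hu.1, hu.2]
  have hv2 : v^2 ≤ 1 := by nlinarith [hv.1, hv.2]
  have hb : u^2*s^2 + v^2*c^2 ≤ 1 := by
    nlinarith [mul_nonneg (sub_nonneg.2 hu2) (sq_nonneg s), mul_nonneg (sub_nonneg.2 hv2) (sq_nonneg c), hs]
  nlinarith [key, hb, sq_nonneg (1 - (u*(s*s') + v*(c*c')))]

/-! ## Terms -/

structure Tm where
  c : ℝ
  a : ℕ
  b : ℕ
  j : ℕ
  gs : List (ℕ × ℕ)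

noncomputable def Tval (γ u v : ℝ) (T : Tm) (t θ φ : ℝ) : ℝ :=
  T.c * Real.sinh (t/2) ^ T.a * Real.cosh (t/2) ^ T.b *
    (T.gs.map fun p => ggf u v p.1 p.2 θ φ).prod *
    (Real.cosh (t/2) - 1 + qK θ φ u v) ^ (-(γ + T.j))

noncomputable def Lsum (γ u v : ℝ) (L : List Tm) (t θ φ : ℝ) : ℝ :=
  (L.map fun T => Tval γ u v T t θ φ).sum

def bumps (f : ℕ × ℕ → ℕ × ℕ) : List (ℕ × ℕ) → List (List (ℕ × ℕ))
  | [] => []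
  | p :: r => (f p :: r) :: (bumps f r).map (p :: ·)

noncomputable def dt (γ : ℝ) (T : Tm) : List Tm :=
  [⟨T.c * T.a / 2, T.a - 1, T.b + 1, T.j, T.gs⟩,
   ⟨T.c * T.b / 2, T.a + 1, T.b - 1, T.j, T.gs⟩,
   ⟨-(T.c * (γ + T.j)) / 2, T.a + 1, T.b, T.j + 1, T.gs⟩]

noncomputable def dθ (γ : ℝ) (T : Tm) : List Tm :=
  ⟨T.c * (γ + T.j) / 2, T.a, T.b, T.j + 1, (1,0) :: T.gs⟩ ::
  (bumps (fun p => (p.1 + 1, p.2)) T.gs).map fun gl => ⟨T.c / 2, T.a, T.b, T.j, gl⟩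

noncomputable def dφ (γ : ℝ) (T : Tm) : List Tm :=
  ⟨T.c * (γ + T.j) / 2, T.a, T.b, T.j + 1, (0,1) :: T.gs⟩ ::
  (bumps (fun p => (p.1, p.2 + 1)) T.gs).map fun gl => ⟨T.c / 2, T.a, T.b, T.j, gl⟩

lemma Lsum_nil (γ u v t θ φ : ℝ) : Lsum γ u v [] t θ φ = 0 := rfl

lemma Lsum_cons (γ u v t θ φ : ℝ) (T : Tm) (L : List Tm) :
    Lsum γ u v (T :: L) t θ φ = Tval γ u v T t θ φ + Lsum γ u v L t θ φ := by
  simp [Lsum]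

lemma Lsum_append (γ u v t θ φ : ℝ) (L₁ L₂ : List Tm) :
    Lsum γ u v (L₁ ++ L₂) t θ φ = Lsum γ u v L₁ t θ φ + Lsum γ u v L₂ t θ φ := by
  simp [Lsum]

noncomputable def gProd (u v : ℝ) (gs : List (ℕ × ℕ)) (θ φ : ℝ) : ℝ :=
  (gs.map fun p => ggf u v p.1 p.2 θ φ).prod

lemma gProd_hasDerivAt_θ (u v : ℝ) (gs : List (ℕ × ℕ)) (θ φ : ℝ) :
    HasDerivAt (fun θ => gProd u v gs θ φ)
      (1/2 * ((bumps (fun p => (p.1 + 1, p.2)) gs).map fun gl => gProd u v gl θ φ).sum) θ := by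
  induction gs with
  | nil => simpa [gProd, bumps] using hasDerivAt_const θ (1 : ℝ)
  | cons p r ih =>
      have h1 := ggf_hasDerivAt_θ u v p.1 p.2 θ φ
      have hmul := h1.mul ih
      have heq : (1/2 * ggf u v (p.1+1) p.2 θ φ) * gProd u v r θ φ +
          ggf u v p.1 p.2 θ φ * (1/2 * ((bumps (fun p => (p.1 + 1, p.2)) r).map fun gl => gProd u v gl θ φ).sum)
          = 1/2 * ((bumps (fun p => (p.1 + 1, p.2)) (p :: r)).map fun gl => gProd u v gl θ φ).sum := by
        rw [bumps]
        rw [List.map_cons, List.sum_cons, List.map_map]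
        have : ((bumps (fun p => (p.1 + 1, p.2)) r).map ((fun gl => gProd u v gl θ φ) ∘ (p :: ·))).sum
            = ((bumps (fun p => (p.1 + 1, p.2)) r).map (fun gl => ggf u v p.1 p.2 θ φ * gProd u v gl θ φ)).sum := by
          congr 1
        rw [this, List.sum_map_mul_left]
        simp [gProd]
        try ring
      rw [← heq]
      have : (fun θ => gProd u v (p :: r) θ φ) = fun θ => ggf u v p.1 p.2 θ φ * gProd u v r θ φ := by
        funext x; simp [gProd]
      rw [this]
      exact hmul

lemma gProd_hasDerivAt_φ (u v : ℝ) (gs : List (ℕ × ℕ)) (θ φ : ℝ) :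
    HasDerivAt (fun φ => gProd u v gs θ φ)
      (1/2 * ((bumps (fun p => (p.1, p.2 + 1)) gs).map fun gl => gProd u v gl θ φ).sum) φ := by
  induction gs with
  | nil => simpa [gProd, bumps] using hasDerivAt_const φ (1 : ℝ)
  | cons p r ih =>
      have h1 := ggf_hasDerivAt_φ u v p.1 p.2 θ φ
      have hmul := h1.mul ih
      have heq : (1/2 * ggf u v p.1 (p.2+1) θ φ) * gProd u v r θ φ +
          ggf u v p.1 p.2 θ φ * (1/2 * ((bumps (fun p => (p.1, p.2 + 1)) r).map fun gl => gProd u v gl θ φ).sum)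
          = 1/2 * ((bumps (fun p => (p.1, p.2 + 1)) (p :: r)).map fun gl => gProd u v gl θ φ).sum := by
        rw [bumps]
        rw [List.map_cons, List.sum_cons, List.map_map]
        have : ((bumps (fun p => (p.1, p.2 + 1)) r).map ((fun gl => gProd u v gl θ φ) ∘ (p :: ·))).sum
            = ((bumps (fun p => (p.1, p.2 + 1)) r).map (fun gl => ggf u v p.1 p.2 θ φ * gProd u v gl θ φ)).sum := by
          congr 1
        rw [this, List.sum_map_mul_left]
        simp [gProd]
        try ring
      rw [← heq]
      have : (fun φ => gProd u v (p :: r) θ φ) = fun φ => ggf u v p.1 p.2 θ φ * gProd u v r θ φ := by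
        funext x; simp [gProd]
      rw [this]
      exact hmul

noncomputable def Qf (u v t θ φ : ℝ) : ℝ := Real.cosh (t/2) - 1 + qK θ φ u v

lemma Tval_hasDerivAt_t (γ u v : ℝ) (T : Tm) (t θ φ : ℝ) (hQ : 0 < Qf u v t θ φ) :
    HasDerivAt (fun t => Tval γ u v T t θ φ) (Lsum γ u v (dt γ T) t θ φ) t := by
  have hhalf : HasDerivAt (fun t : ℝ => t/2) (1/2) t := (hasDerivAt_id t).div_const 2
  have hsinh : HasDerivAt (fun t => Real.sinh (t/2)) (Real.cosh (t/2) * (1/2)) t :=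
    (Real.hasDerivAt_sinh _).comp t hhalf
  have hcosh : HasDerivAt (fun t => Real.cosh (t/2)) (Real.sinh (t/2) * (1/2)) t :=
    (Real.hasDerivAt_cosh _).comp t hhalf
  have hsa : HasDerivAt (fun t => Real.sinh (t/2) ^ T.a)
      ((T.a : ℝ) * Real.sinh (t/2) ^ (T.a - 1) * (Real.cosh (t/2) * (1/2))) t := hsinh.pow T.a
  have hcb : HasDerivAt (fun t => Real.cosh (t/2) ^ T.b)
      ((T.b : ℝ) * Real.cosh (t/2) ^ (T.b - 1) * (Real.sinh (t/2) * (1/2))) t := hcosh.pow T.b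
  have hq : HasDerivAt (fun t => Real.cosh (t/2) - 1 + qK θ φ u v)
      (Real.sinh (t/2) * (1/2)) t := (hcosh.sub_const 1).add_const _
  have hpow := hq.rpow_const (p := -(γ + T.j)) (Or.inl hQ.ne')
  have h := ((((hsa.const_mul T.c).fun_mul hcb).mul_const (gProd u v T.gs θ φ)).fun_mul hpow)
  have hfun : (fun t => T.c * Real.sinh (t/2) ^ T.a * Real.cosh (t/2) ^ T.b *
      gProd u v T.gs θ φ * (Real.cosh (t/2) - 1 + qK θ φ u v) ^ (-(γ + T.j)))
      = fun t => Tval γ u v T t θ φ := by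
    funext x; rfl
  rw [hfun] at h
  refine h.congr_deriv ?_
  symm
  simp only [Lsum, dt, List.map_cons, List.map_nil, List.sum_cons, List.sum_nil, Tval]
  have hexp : -(γ + ((T.j : ℝ) + 1)) = -(γ + (T.j : ℝ)) - 1 := by ring
  push_cast
  rw [hexp]
  set Q := Real.cosh (t/2) - 1 + qK θ φ u v
  set X := Q ^ (-(γ + (T.j:ℝ)))
  set Y := Q ^ (-(γ + (T.j:ℝ)) - 1)
  simp only [gProd]
  ring

lemma Qf_hasDerivAt_θ (u v t θ φ : ℝ) :
    HasDerivAt (fun θ => Qf u v t θ φ) (-(1/2 * ggf u v 1 0 θ φ)) θ := by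
  have h := ((ggf_hasDerivAt_θ u v 0 0 θ φ).fun_neg).const_add (Real.cosh (t/2))
  have hfun : (fun θ => Real.cosh (t/2) + -(ggf u v 0 0 θ φ)) = (fun θ => Qf u v t θ φ) := by
    funext x; rw [Qf, qK_eq]; ring
  rw [hfun] at h
  simpa using h

lemma Qf_hasDerivAt_φ (u v t θ φ : ℝ) :
    HasDerivAt (fun φ => Qf u v t θ φ) (-(1/2 * ggf u v 0 1 θ φ)) φ := by
  have h := ((ggf_hasDerivAt_φ u v 0 0 θ φ).fun_neg).const_add (Real.cosh (t/2))
  have hfun : (fun φ => Real.cosh (t/2) + -(ggf u v 0 0 θ φ)) = (fun φ => Qf u v t θ φ) := by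
    funext x; rw [Qf, qK_eq]; ring
  rw [hfun] at h
  simpa using h

lemma Tval_hasDerivAt_θ (γ u v : ℝ) (T : Tm) (t θ φ : ℝ) (hQ : 0 < Qf u v t θ φ) :
    HasDerivAt (fun θ => Tval γ u v T t θ φ) (Lsum γ u v (dθ γ T) t θ φ) θ := by
  have hgp := gProd_hasDerivAt_θ u v T.gs θ φ
  have hpow := (Qf_hasDerivAt_θ u v t θ φ).rpow_const (p := -(γ + T.j)) (Or.inl hQ.ne')
  set K := T.c * Real.sinh (t/2) ^ T.a * Real.cosh (t/2) ^ T.b with hK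
  have h := (hgp.const_mul K).fun_mul hpow
  have hfun : (fun θ => K * gProd u v T.gs θ φ * Qf u v t θ φ ^ (-(γ + (T.j:ℝ))))
      = fun θ => Tval γ u v T t θ φ := by
    funext x; simp only [Tval, Qf, gProd, hK]
  rw [hfun] at h
  refine h.congr_deriv ?_
  symm
  simp only [Lsum, dθ, List.map_cons, List.sum_cons, List.map_map, Tval]
  have hcomp : ((bumps (fun p => (p.1 + 1, p.2)) T.gs).map
        ((fun T' : Tm => T'.c * Real.sinh (t/2) ^ T'.a * Real.cosh (t/2) ^ T'.b *
          (T'.gs.map fun p => ggf u v p.1 p.2 θ φ).prod *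
          (Real.cosh (t/2) - 1 + qK θ φ u v) ^ (-(γ + T'.j))) ∘
          (fun gl => (⟨T.c / 2, T.a, T.b, T.j, gl⟩ : Tm)))).sum
      = ((bumps (fun p => (p.1 + 1, p.2)) T.gs).map
          (fun gl => (T.c / 2 * Real.sinh (t/2) ^ T.a * Real.cosh (t/2) ^ T.b *
            (Real.cosh (t/2) - 1 + qK θ φ u v) ^ (-(γ + (T.j:ℝ)))) * gProd u v gl θ φ)).sum := by
    refine congrArg List.sum (List.map_congr_left ?_)
    intro gl _
    simp only [Function.comp, gProd]
    ring
  rw [hcomp, List.sum_map_mul_left]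
  have hexp : -(γ + ((T.j : ℝ) + 1)) = -(γ + (T.j : ℝ)) - 1 := by ring
  push_cast
  rw [hexp]
  set Q := Real.cosh (t/2) - 1 + qK θ φ u v
  have hQQ : Qf u v t θ φ = Q := rfl
  rw [hQQ]
  set X := Q ^ (-(γ + (T.j:ℝ)))
  set Y := Q ^ (-(γ + (T.j:ℝ)) - 1)
  simp only [gProd, List.map_cons, List.prod_cons]
  ring

lemma Tval_hasDerivAt_φ (γ u v : ℝ) (T : Tm) (t θ φ : ℝ) (hQ : 0 < Qf u v t θ φ) :
    HasDerivAt (fun φ => Tval γ u v T t θ φ) (Lsum γ u v (dφ γ T) t θ φ) φ := by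
  have hgp := gProd_hasDerivAt_φ u v T.gs θ φ
  have hpow := (Qf_hasDerivAt_φ u v t θ φ).rpow_const (p := -(γ + T.j)) (Or.inl hQ.ne')
  set K := T.c * Real.sinh (t/2) ^ T.a * Real.cosh (t/2) ^ T.b with hK
  have h := (hgp.const_mul K).fun_mul hpow
  have hfun : (fun φ => K * gProd u v T.gs θ φ * Qf u v t θ φ ^ (-(γ + (T.j:ℝ))))
      = fun φ => Tval γ u v T t θ φ := by
    funext x; simp only [Tval, Qf, gProd, hK]
  rw [hfun] at h
  refine h.congr_deriv ?_
  symm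
  simp only [Lsum, dφ, List.map_cons, List.sum_cons, List.map_map, Tval]
  have hcomp : ((bumps (fun p => (p.1, p.2 + 1)) T.gs).map
        ((fun T' : Tm => T'.c * Real.sinh (t/2) ^ T'.a * Real.cosh (t/2) ^ T'.b *
          (T'.gs.map fun p => ggf u v p.1 p.2 θ φ).prod *
          (Real.cosh (t/2) - 1 + qK θ φ u v) ^ (-(γ + T'.j))) ∘
          (fun gl => (⟨T.c / 2, T.a, T.b, T.j, gl⟩ : Tm)))).sum
      = ((bumps (fun p => (p.1, p.2 + 1)) T.gs).map
          (fun gl => (T.c / 2 * Real.sinh (t/2) ^ T.a * Real.cosh (t/2) ^ T.b *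
            (Real.cosh (t/2) - 1 + qK θ φ u v) ^ (-(γ + (T.j:ℝ)))) * gProd u v gl θ φ)).sum := by
    refine congrArg List.sum (List.map_congr_left ?_)
    intro gl _
    simp only [Function.comp, gProd]
    ring
  rw [hcomp, List.sum_map_mul_left]
  have hexp : -(γ + ((T.j : ℝ) + 1)) = -(γ + (T.j : ℝ)) - 1 := by ring
  push_cast
  rw [hexp]
  set Q := Real.cosh (t/2) - 1 + qK θ φ u v
  have hQQ : Qf u v t θ φ = Q := rfl
  rw [hQQ]
  set X := Q ^ (-(γ + (T.j:ℝ)))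
  set Y := Q ^ (-(γ + (T.j:ℝ)) - 1)
  simp only [gProd, List.map_cons, List.prod_cons]
  ring

/-! ## list-level derivatives -/

noncomputable def dL (d : Tm → List Tm) (L : List Tm) : List Tm := L.flatMap d

lemma Lsum_hasDerivAt_t (γ u v : ℝ) (L : List Tm) (t θ φ : ℝ) (hQ : 0 < Qf u v t θ φ) :
    HasDerivAt (fun t => Lsum γ u v L t θ φ) (Lsum γ u v (dL (dt γ) L) t θ φ) t := by
  induction L with
  | nil => simpa [Lsum, dL] using hasDerivAt_const t (0:ℝ)
  | cons T L ih =>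
      have h := (Tval_hasDerivAt_t γ u v T t θ φ hQ).fun_add ih
      have : dL (dt γ) (T :: L) = dt γ T ++ dL (dt γ) L := by simp [dL]
      rw [this, Lsum_append]
      have hfun : (fun t => Tval γ u v T t θ φ + Lsum γ u v L t θ φ)
          = fun t => Lsum γ u v (T :: L) t θ φ := by
        funext x; rw [Lsum_cons]
      rw [hfun] at h
      exact h

lemma Lsum_hasDerivAt_θ (γ u v : ℝ) (L : List Tm) (t θ φ : ℝ) (hQ : 0 < Qf u v t θ φ) :
    HasDerivAt (fun θ => Lsum γ u v L t θ φ) (Lsum γ u v (dL (dθ γ) L) t θ φ) θ := by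
  induction L with
  | nil => simpa [Lsum, dL] using hasDerivAt_const θ (0:ℝ)
  | cons T L ih =>
      have h := (Tval_hasDerivAt_θ γ u v T t θ φ hQ).fun_add ih
      have : dL (dθ γ) (T :: L) = dθ γ T ++ dL (dθ γ) L := by simp [dL]
      rw [this, Lsum_append]
      have hfun : (fun θ => Tval γ u v T t θ φ + Lsum γ u v L t θ φ)
          = fun θ => Lsum γ u v (T :: L) t θ φ := by
        funext x; rw [Lsum_cons]
      rw [hfun] at h
      exact h

lemma Lsum_hasDerivAt_φ (γ u v : ℝ) (L : List Tm) (t θ φ : ℝ) (hQ : 0 < Qf u v t θ φ) :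
    HasDerivAt (fun φ => Lsum γ u v L t θ φ) (Lsum γ u v (dL (dφ γ) L) t θ φ) φ := by
  induction L with
  | nil => simpa [Lsum, dL] using hasDerivAt_const φ (0:ℝ)
  | cons T L ih =>
      have h := (Tval_hasDerivAt_φ γ u v T t θ φ hQ).fun_add ih
      have : dL (dφ γ) (T :: L) = dφ γ T ++ dL (dφ γ) L := by simp [dL]
      rw [this, Lsum_append]
      have hfun : (fun φ => Tval γ u v T t θ φ + Lsum γ u v L t θ φ)
          = fun φ => Lsum γ u v (T :: L) t θ φ := by
        funext x; rw [Lsum_cons]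
      rw [hfun] at h
      exact h

lemma Qf_pos {u v : ℝ} (hu : |u| ≤ 1) (hv : |v| ≤ 1) {t : ℝ} (ht : 0 < t) (θ φ : ℝ) :
    0 < Qf u v t θ φ := by
  have h1 : 1 < Real.cosh (t/2) := Real.one_lt_cosh.2 (by positivity)
  have h2 := qK_nonneg hu hv θ φ
  rw [Qf]; linarith

/-- the base term: `sinh(t/2) * Q^(-γ)` -/
def T₀ : Tm := ⟨1, 1, 0, 0, []⟩

lemma Tval_T₀ (γ u v t θ φ : ℝ) :
    Tval γ u v T₀ t θ φ = Real.sinh (t/2) * (Real.cosh (t/2) - 1 + qK θ φ u v) ^ (-γ) := by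
  simp [Tval, T₀]

/-- iterated `t`-derivatives -/
lemma iter_t {u v : ℝ} (γ : ℝ) (hu : |u| ≤ 1) (hv : |v| ≤ 1) (M : ℕ) :
    ∀ t : ℝ, 0 < t → ∀ θ φ : ℝ,
      iteratedDeriv M (fun s => Real.sinh (s/2) * (Real.cosh (s/2) - 1 + qK θ φ u v) ^ (-γ)) t
        = Lsum γ u v ((dL (dt γ))^[M] [T₀]) t θ φ := by
  induction M with
  | zero =>
      intro t ht θ φ
      simp [iteratedDeriv_zero, Lsum, Tval_T₀]
  | succ n ih =>
      intro t ht θ φ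
      rw [iteratedDeriv_succ]
      have hev : (iteratedDeriv n
          (fun s => Real.sinh (s/2) * (Real.cosh (s/2) - 1 + qK θ φ u v) ^ (-γ)))
          =ᶠ[nhds t] (fun s => Lsum γ u v ((dL (dt γ))^[n] [T₀]) s θ φ) := by
        filter_upwards [IsOpen.mem_nhds isOpen_Ioi ht] with s hs
        exact ih s hs θ φ
      rw [hev.deriv_eq]
      rw [Function.iterate_succ_apply']
      exact (Lsum_hasDerivAt_t γ u v _ t θ φ (Qf_pos hu hv ht θ φ)).deriv

/-- iterated `θ`-derivatives -/
lemma iter_θ {u v : ℝ} (γ : ℝ) (hu : |u| ≤ 1) (hv : |v| ≤ 1) (L : List Tm) {t : ℝ} (ht : 0 < t)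
    (N : ℕ) : ∀ θ φ : ℝ,
      iteratedDeriv N (fun x => Lsum γ u v L t x φ) θ
        = Lsum γ u v ((dL (dθ γ))^[N] L) t θ φ := by
  induction N with
  | zero => intro θ φ; simp [iteratedDeriv_zero]
  | succ n ih =>
      intro θ φ
      rw [iteratedDeriv_succ]
      have hfun : iteratedDeriv n (fun x => Lsum γ u v L t x φ)
          = fun x => Lsum γ u v ((dL (dθ γ))^[n] L) t x φ := funext (fun x => ih x φ)
      rw [hfun, Function.iterate_succ_apply']
      exact (Lsum_hasDerivAt_θ γ u v _ t θ φ (Qf_pos hu hv ht θ φ)).deriv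

noncomputable def Lfin (γ : ℝ) (M N : ℕ) : List Tm :=
  dL (dφ γ) ((dL (dθ γ))^[N] ((dL (dt γ))^[M] [T₀]))

lemma PhiDerPhi_eq (α β : ℝ) (M N : ℕ) {t : ℝ} (ht : 0 < t) (θ φ : ℝ) {u v : ℝ}
    (hu : |u| ≤ 1) (hv : |v| ≤ 1) :
    PhiDerPhi α β M N t θ φ u v
      = Lsum (α + β + 2) u v (Lfin (α + β + 2) M N) t θ φ := by
  set γ := α + β + 2 with hγ
  rw [PhiDerPhi]
  have h1 : ∀ y : ℝ, (fun x => iteratedDeriv M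
      (fun s => Real.sinh (s/2) * (Real.cosh (s/2) - 1 + qK x y u v) ^ (-(α+β+2))) t)
      = fun x => Lsum γ u v ((dL (dt γ))^[M] [T₀]) t x y := by
    intro y; funext x
    exact iter_t γ hu hv M t ht x y
  have h2 : (fun y => iteratedDeriv N (fun x => iteratedDeriv M
      (fun s => Real.sinh (s/2) * (Real.cosh (s/2) - 1 + qK x y u v) ^ (-(α+β+2))) t) θ)
      = fun y => Lsum γ u v ((dL (dθ γ))^[N] ((dL (dt γ))^[M] [T₀])) t θ y := by
    funext y
    rw [h1 y]
    exact iter_θ γ hu hv _ ht N θ y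
  rw [h2]
  exact (Lsum_hasDerivAt_φ γ u v _ t θ φ (Qf_pos hu hv ht θ φ)).deriv

/-! ## Invariants -/

def w1 (p : ℕ × ℕ) : Bool := p.1 + p.2 == 1

def m1 (gs : List (ℕ × ℕ)) : ℕ := gs.countP w1

lemma m1_cons (p : ℕ × ℕ) (r : List (ℕ × ℕ)) :
    m1 (p :: r) = m1 r + if w1 p then 1 else 0 := by
  simp [m1, List.countP_cons]

lemma m1_bumps (f : ℕ × ℕ → ℕ × ℕ) :
    ∀ gs gl, gl ∈ bumps f gs → m1 gs ≤ m1 gl + 1 := by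
  intro gs
  induction gs with
  | nil => intro gl h; simp [bumps] at h
  | cons p r ih =>
      intro gl h
      rw [bumps] at h
      rcases List.mem_cons.1 h with h1 | h2
      · subst h1
        rw [m1_cons, m1_cons]
        have : (if w1 p then 1 else 0) ≤ 1 := by split <;> omega
        omega
      · rcases List.mem_map.1 h2 with ⟨gl', hgl', rfl⟩
        have := ih gl' hgl'
        rw [m1_cons, m1_cons]
        omega

lemma bumps_ne_nil (f : ℕ × ℕ → ℕ × ℕ) (gl : List (ℕ × ℕ)) (h : gl ∈ bumps f []) : False := by
  simp [bumps] at h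

def Inv (n : ℕ) (T : Tm) : Prop :=
  T.c = 0 ∨ (T.a + T.b ≤ T.j + 1 ∧ (T.j + 1 ≤ T.a + T.b → T.gs = []) ∧
    2 * T.j + 1 ≤ n + T.a + m1 T.gs)

def FinInv (K : ℕ) (T : Tm) : Prop :=
  T.c = 0 ∨ (T.a + T.b ≤ T.j ∧ 2 * T.j ≤ K + T.a + m1 T.gs)

lemma inv_T₀ : Inv 0 T₀ := by
  right; refine ⟨by simp [T₀], fun _ => rfl, by simp [T₀, m1]⟩

lemma inv_dt {γ : ℝ} {n : ℕ} {T T' : Tm} (h : Inv n T) (h' : T' ∈ dt γ T) : Inv (n+1) T' := by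
  rcases h with h | ⟨h1, h2, h3⟩
  · simp [dt] at h'
    rcases h' with rfl | rfl | rfl <;> · left; simp [h]
  · simp [dt] at h'
    rcases h' with rfl | rfl | rfl
    · by_cases ha : T.a = 0
      · left; simp [ha]
      · right
        refine ⟨by simp; omega, ?_, by simp; omega⟩
        intro hj; simp at hj ⊢; exact h2 (by omega)
    · by_cases hb : T.b = 0
      · left; simp [hb]
      · right
        refine ⟨by simp; omega, ?_, by simp; omega⟩
        intro hj; simp at hj ⊢; exact h2 (by omega)
    · right
      refine ⟨by simp; omega, ?_, by simp; omega⟩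
      intro hj; simp at hj ⊢; exact h2 (by omega)

lemma inv_dθ {γ : ℝ} {n : ℕ} {T T' : Tm} (h : Inv n T) (h' : T' ∈ dθ γ T) : Inv (n+1) T' := by
  rcases h with h | ⟨h1, h2, h3⟩
  · rw [dθ] at h'
    rcases List.mem_cons.1 h' with rfl | h2
    · left; simp [h]
    · rcases List.mem_map.1 h2 with ⟨gl, _, rfl⟩
      left; simp [h]
  · rw [dθ] at h'
    rcases List.mem_cons.1 h' with rfl | hm
    · right
      refine ⟨by simp; omega, ?_, ?_⟩
      · intro hj; simp at hj; omega
      · simp [m1_cons, w1]; omega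
    · rcases List.mem_map.1 hm with ⟨gl, hgl, rfl⟩
      have hne : T.gs ≠ [] := by
        intro he; rw [he] at hgl; exact bumps_ne_nil _ _ hgl
      have hab : T.a + T.b ≤ T.j := by
        by_contra hc
        exact hne (h2 (by omega))
      have hm1 := m1_bumps _ T.gs gl hgl
      right
      refine ⟨by simp; omega, ?_, by simp; omega⟩
      intro hj; simp at hj; omega

lemma fininv_dφ {γ : ℝ} {K : ℕ} {T T' : Tm} (h : Inv K T) (h' : T' ∈ dφ γ T) : FinInv K T' := by
  rcases h with h | ⟨h1, h2, h3⟩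
  · rw [dφ] at h'
    rcases List.mem_cons.1 h' with rfl | h2
    · left; simp [h]
    · rcases List.mem_map.1 h2 with ⟨gl, _, rfl⟩
      left; simp [h]
  · rw [dφ] at h'
    rcases List.mem_cons.1 h' with rfl | hm
    · right
      constructor
      · simp; omega
      · simp [m1_cons, w1]; omega
    · rcases List.mem_map.1 hm with ⟨gl, hgl, rfl⟩
      have hne : T.gs ≠ [] := by
        intro he; rw [he] at hgl; exact bumps_ne_nil _ _ hgl
      have hab : T.a + T.b ≤ T.j := by
        by_contra hc
        exact hne (h2 (by omega))
      have hm1 := m1_bumps _ T.gs gl hgl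
      right
      exact ⟨by simp; omega, by simp; omega⟩

lemma invL_iter_t (γ : ℝ) (M : ℕ) : ∀ T ∈ (dL (dt γ))^[M] [T₀], Inv M T := by
  induction M with
  | zero => intro T hT; simp at hT; subst hT; exact inv_T₀
  | succ n ih =>
      intro T hT
      rw [Function.iterate_succ_apply'] at hT
      rcases List.mem_flatMap.1 hT with ⟨T', hT', hmem⟩
      exact inv_dt (ih T' hT') hmem

lemma invL_iter_θ (γ : ℝ) (M N : ℕ) :
    ∀ T ∈ (dL (dθ γ))^[N] ((dL (dt γ))^[M] [T₀]), Inv (M + N) T := by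
  induction N with
  | zero => intro T hT; simpa using invL_iter_t γ M T hT
  | succ n ih =>
      intro T hT
      rw [Function.iterate_succ_apply'] at hT
      rcases List.mem_flatMap.1 hT with ⟨T', hT', hmem⟩
      exact inv_dθ (ih T' hT') hmem

lemma fininv_Lfin (γ : ℝ) (M N : ℕ) : ∀ T ∈ Lfin γ M N, FinInv (M + N) T := by
  intro T hT
  rcases List.mem_flatMap.1 hT with ⟨T', hT', hmem⟩
  exact fininv_dφ (invL_iter_θ γ M N T' hT') hmem

/-! ## elementary bounds -/

lemma exp_half_lt_two : Real.exp (1/2) < 2 := by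
  have h := Real.exp_one_lt_d9
  have h2 : Real.exp (1/2) * Real.exp (1/2) = Real.exp 1 := by
    rw [← Real.exp_add]; norm_num
  nlinarith [Real.exp_pos (1/2)]

lemma exp_half_ge : (3:ℝ)/2 ≤ Real.exp (1/2) := by
  have := Real.add_one_le_exp (1/2 : ℝ)
  linarith

lemma cosh_half_le : Real.cosh (1/2) ≤ 3/2 := by
  rw [Real.cosh_eq]
  have h1 := exp_half_lt_two
  have h2 := exp_half_ge
  have h3 : Real.exp (-(1/2)) = (Real.exp (1/2))⁻¹ := by rw [Real.exp_neg]
  rw [h3]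
  have h4 : (Real.exp (1/2))⁻¹ ≤ 2/3 := by
    rw [inv_le_comm₀ (by positivity) (by norm_num)]
    linarith
  linarith

lemma cosh_half_ge : (17:ℝ)/16 ≤ Real.cosh (1/2) := by
  rw [Real.cosh_eq]
  have h2 := exp_half_ge
  have h3 : Real.exp (-(1/2)) = (Real.exp (1/2))⁻¹ := by rw [Real.exp_neg]
  rw [h3]
  have hpos : 0 < Real.exp (1/2) := Real.exp_pos _
  have key : (17:ℝ)/8 ≤ Real.exp (1/2) + (Real.exp (1/2))⁻¹ := by
    have hinv : (Real.exp (1/2))⁻¹ * Real.exp (1/2) = 1 := inv_mul_cancel₀ (ne_of_gt hpos)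
    nlinarith [sq_nonneg (Real.exp (1/2) - 3/2)]
  linarith

lemma sinh_le_cosh (x : ℝ) : Real.sinh x ≤ Real.cosh x := by
  have := Real.cosh_sub_sinh x
  have := Real.exp_pos (-x)
  linarith

lemma sinh_nonneg' {x : ℝ} (hx : 0 ≤ x) : 0 ≤ Real.sinh x := by
  have : Real.sinh 0 ≤ Real.sinh x := Real.sinh_le_sinh.2 hx
  simpa using this

lemma cosh_one_le {t : ℝ} (ht : 0 < t) (ht1 : t ≤ 1) : Real.cosh (t/2) ≤ 3/2 := by
  refine le_trans ?_ cosh_half_le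
  rw [Real.cosh_le_cosh]
  rw [abs_of_pos (by linarith), abs_of_pos (by norm_num)]
  linarith

lemma cosh_gt_one {t : ℝ} (ht : 1 < t) : (17:ℝ)/16 ≤ Real.cosh (t/2) := by
  refine le_trans cosh_half_ge ?_
  rw [Real.cosh_le_cosh]
  rw [abs_of_pos (by norm_num), abs_of_pos (by linarith)]
  linarith

lemma le_of_sq_le_sq' {a b : ℝ} (ha : 0 ≤ a) (hb : 0 ≤ b) (h : a^2 ≤ b^2) : a ≤ b := by
  nlinarith [sq_nonneg (a - b), sq_nonneg (a + b)]

noncomputable def cB (K : ℕ) (T : Tm) : ℝ :=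
  |T.c| * 2 ^ (T.a + T.b + T.gs.length + K) * 17 ^ (T.a + T.b) * 16 ^ (T.j + 1)

lemma cB_nonneg (K : ℕ) (T : Tm) : 0 ≤ cB K T := by
  rw [cB]; positivity

lemma gProd_bound {u v : ℝ} (hu : |u| ≤ 1) (hv : |v| ≤ 1) {θ φ : ℝ} {R : ℝ} (hR0 : 0 ≤ R)
    (hg1 : ∀ p : ℕ × ℕ, p.1 + p.2 = 1 → |ggf u v p.1 p.2 θ φ| ≤ 2 * R) :
    ∀ gs : List (ℕ × ℕ), |gProd u v gs θ φ| ≤ 2 ^ gs.length * R ^ (m1 gs) := by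
  intro gs
  induction gs with
  | nil => simp [gProd, m1]
  | cons p r ih =>
      have hsplit : |gProd u v (p :: r) θ φ| = |ggf u v p.1 p.2 θ φ| * |gProd u v r θ φ| := by
        rw [gProd, List.map_cons, List.prod_cons, abs_mul]; rfl
      rw [hsplit, m1_cons, List.length_cons]
      by_cases hw : w1 p
      · have h1 : |ggf u v p.1 p.2 θ φ| ≤ 2 * R := hg1 p (by simpa [w1] using hw)
        have := mul_le_mul h1 ih (abs_nonneg _) (by positivity)
        calc |ggf u v p.1 p.2 θ φ| * |gProd u v r θ φ| ≤ (2*R) * (2 ^ r.length * R ^ m1 r) := this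
          _ = 2 ^ (r.length + 1) * R ^ (m1 r + if w1 p then 1 else 0) := by
              simp [hw, pow_succ]; ring
      · have h1 : |ggf u v p.1 p.2 θ φ| ≤ 2 := abs_ggf_le hu hv _ _ _ _
        have := mul_le_mul h1 ih (abs_nonneg _) (by norm_num)
        calc |ggf u v p.1 p.2 θ φ| * |gProd u v r θ φ| ≤ 2 * (2 ^ r.length * R ^ m1 r) := this
          _ = 2 ^ (r.length + 1) * R ^ (m1 r + if w1 p then 1 else 0) := by
              simp [hw, pow_succ]; ring

lemma abs_Tval (γ u v : ℝ) (T : Tm) {t : ℝ} (θ φ : ℝ) (ht : 0 ≤ t) (hQ : 0 < Qf u v t θ φ) :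
    |Tval γ u v T t θ φ| = |T.c| * Real.sinh (t/2) ^ T.a * Real.cosh (t/2) ^ T.b *
      |gProd u v T.gs θ φ| * Qf u v t θ φ ^ (-(γ + (T.j:ℝ))) := by
  have hsh : 0 ≤ Real.sinh (t/2) := sinh_nonneg' (by linarith)
  have hch : 0 ≤ Real.cosh (t/2) := (Real.cosh_pos _).le
  have hQe : |(Real.cosh (t/2) - 1 + qK θ φ u v) ^ (-(γ + (T.j:ℝ)))|
      = Qf u v t θ φ ^ (-(γ + (T.j:ℝ))) :=
    abs_of_nonneg (Real.rpow_pos_of_pos hQ _).le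
  rw [Tval, abs_mul, abs_mul, abs_mul, abs_mul,
    abs_of_nonneg (pow_nonneg hsh _), abs_of_nonneg (pow_nonneg hch _), hQe]
  rfl

set_option maxHeartbeats 2000000 in
lemma tval_bound₁ (γ : ℝ) {u v : ℝ} (hu : |u| ≤ 1) (hv : |v| ≤ 1) {K : ℕ} {T : Tm}
    (hT : FinInv K T) {t : ℝ} (θ φ : ℝ) (ht : 0 < t) (ht1 : t ≤ 1) :
    |Tval γ u v T t θ φ| ≤ cB K T * Qf u v t θ φ ^ (-(γ + (K:ℝ)/2)) := by
  have hQ : 0 < Qf u v t θ φ := Qf_pos hu hv ht θ φ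
  rcases hT with hc | ⟨hab, hwt⟩
  · rw [Tval, cB, hc]
    simp [Real.rpow_nonneg hQ.le]
  set Q := Qf u v t θ φ with hQdef
  have hQpos := hQ
  have hq0 : 0 ≤ qK θ φ u v := qK_nonneg hu hv θ φ
  have hq2 : qK θ φ u v ≤ 2 := qK_le_two hu hv θ φ
  have hch : Real.cosh (t/2) ≤ 3/2 := cosh_one_le ht ht1
  have hch1 : 1 ≤ Real.cosh (t/2) := Real.one_le_cosh _
  have hQ52 : Q ≤ 5/2 := by rw [hQdef, Qf]; linarith
  have hcmQ : Real.cosh (t/2) - 1 ≤ Q := by rw [hQdef, Qf]; linarith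
  have hsh0 : 0 ≤ Real.sinh (t/2) := sinh_nonneg' (by linarith)
  have hshsq : Real.sinh (t/2)^2 = Real.cosh (t/2)^2 - 1 := by
    have := Real.cosh_sq (t/2); linarith
  have hshQ : Real.sinh (t/2)^2 ≤ (5/2) * Q := by nlinarith
  rw [abs_Tval γ u v T θ φ ht.le hQ]
  rcases le_or_gt Q 1 with hQ1 | hQ1
  · -- small Q
    set R := Q ^ ((1:ℝ)/2) with hRdef
    have hR0 : 0 ≤ R := Real.rpow_nonneg hQ.le _
    have hRsq : R^2 = Q := by
      rw [hRdef, ← Real.rpow_natCast (Q ^ ((1:ℝ)/2)) 2, ← Real.rpow_mul hQ.le]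
      norm_num
    have hsb : Real.sinh (t/2) ≤ 2 * R := by
      refine le_of_sq_le_sq' hsh0 (by positivity) ?_
      have : (2*R)^2 = 4 * Q := by rw [mul_pow, hRsq]; ring
      rw [this]; nlinarith
    have hg1 : ∀ p : ℕ × ℕ, p.1 + p.2 = 1 → |ggf u v p.1 p.2 θ φ| ≤ 2 * R := by
      rintro ⟨k, l⟩ hkl
      have hcase : (k = 1 ∧ l = 0) ∨ (k = 0 ∧ l = 1) := by omega
      have h4Q : (2*R)^2 = 4 * Q := by rw [mul_pow, hRsq]; ring
      have hqQ : qK θ φ u v ≤ Q := by rw [hQdef, Qf]; linarith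
      rcases hcase with ⟨rfl, rfl⟩ | ⟨rfl, rfl⟩
      · refine le_of_sq_le_sq' (abs_nonneg _) (by positivity) ?_
        rw [sq_abs, h4Q]
        have := sq_ggf10_le hu hv θ φ; nlinarith
      · refine le_of_sq_le_sq' (abs_nonneg _) (by positivity) ?_
        rw [sq_abs, h4Q]
        have := sq_ggf01_le hu hv θ φ; nlinarith
    have hprod := gProd_bound hu hv hR0 hg1 T.gs
    have step1 : |T.c| * Real.sinh (t/2) ^ T.a * Real.cosh (t/2) ^ T.b *
        |gProd u v T.gs θ φ| * Q ^ (-(γ + (T.j:ℝ)))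
        ≤ |T.c| * (2*R) ^ T.a * 2 ^ T.b * (2 ^ T.gs.length * R ^ m1 T.gs) *
          Q ^ (-(γ + (T.j:ℝ))) := by
      have hQe : (0:ℝ) ≤ Q ^ (-(γ + (T.j:ℝ))) := (Real.rpow_pos_of_pos hQ _).le
      have b2 : Real.sinh (t/2) ^ T.a ≤ (2*R) ^ T.a := pow_le_pow_left₀ hsh0 hsb _
      have b3 : Real.cosh (t/2) ^ T.b ≤ (2:ℝ) ^ T.b :=
        pow_le_pow_left₀ (Real.cosh_pos _).le (by linarith) _
      have n1 : (0:ℝ) ≤ |T.c| * (2*R) ^ T.a := by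
        apply mul_nonneg (abs_nonneg _) (pow_nonneg (by linarith) _)
      have h1 : |T.c| * Real.sinh (t/2) ^ T.a ≤ |T.c| * (2*R) ^ T.a :=
        mul_le_mul_of_nonneg_left b2 (abs_nonneg _)
      have h2 : |T.c| * Real.sinh (t/2) ^ T.a * Real.cosh (t/2) ^ T.b
          ≤ |T.c| * (2*R) ^ T.a * 2 ^ T.b :=
        mul_le_mul h1 b3 (pow_nonneg (Real.cosh_pos _).le _) n1
      have h3 : |T.c| * Real.sinh (t/2) ^ T.a * Real.cosh (t/2) ^ T.b * |gProd u v T.gs θ φ|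
          ≤ |T.c| * (2*R) ^ T.a * 2 ^ T.b * (2 ^ T.gs.length * R ^ m1 T.gs) :=
        mul_le_mul h2 hprod (abs_nonneg _) (by positivity)
      exact mul_le_mul_of_nonneg_right h3 hQe
    have hpows : |T.c| * (2*R) ^ T.a * 2 ^ T.b * (2 ^ T.gs.length * R ^ m1 T.gs) *
          Q ^ (-(γ + (T.j:ℝ)))
        = (|T.c| * 2 ^ (T.a + T.b + T.gs.length)) *
          (Q ^ (((T.a + m1 T.gs : ℕ):ℝ)/2) * Q ^ (-(γ + (T.j:ℝ)))) := by
      have hRR : R ^ T.a * R ^ m1 T.gs = Q ^ (((T.a + m1 T.gs : ℕ):ℝ)/2) := by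
        rw [← pow_add, hRdef, ← Real.rpow_natCast (Q ^ ((1:ℝ)/2)) (T.a + m1 T.gs),
          ← Real.rpow_mul hQ.le]
        congr 1; push_cast; ring
      rw [← hRR, mul_pow, pow_add, pow_add]
      ring
    have hcombine : Q ^ (((T.a + m1 T.gs : ℕ):ℝ)/2) * Q ^ (-(γ + (T.j:ℝ)))
        = Q ^ ((((T.a + m1 T.gs : ℕ):ℝ)/2) - γ - (T.j:ℝ)) := by
      rw [← Real.rpow_add hQ]; ring_nf
    have hexp : Q ^ ((((T.a + m1 T.gs : ℕ):ℝ)/2) - γ - (T.j:ℝ)) ≤ Q ^ (-(γ + (K:ℝ)/2)) := by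
      apply Real.rpow_le_rpow_of_exponent_ge hQ hQ1
      have : (2 * T.j : ℝ) ≤ (K:ℝ) + T.a + m1 T.gs := by exact_mod_cast hwt
      push_cast
      linarith
    calc |T.c| * Real.sinh (t/2) ^ T.a * Real.cosh (t/2) ^ T.b *
        |gProd u v T.gs θ φ| * Q ^ (-(γ + (T.j:ℝ)))
        ≤ (|T.c| * 2 ^ (T.a + T.b + T.gs.length)) *
          Q ^ ((((T.a + m1 T.gs : ℕ):ℝ)/2) - γ - (T.j:ℝ)) := by
          rw [← hcombine]; rw [← hpows]; exact step1
      _ ≤ (|T.c| * 2 ^ (T.a + T.b + T.gs.length)) * Q ^ (-(γ + (K:ℝ)/2)) := by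
          apply mul_le_mul_of_nonneg_left hexp (by positivity)
      _ ≤ cB K T * Q ^ (-(γ + (K:ℝ)/2)) := by
          apply mul_le_mul_of_nonneg_right ?_ (Real.rpow_pos_of_pos hQ _).le
          rw [cB]
          have h1 : (1:ℝ) ≤ 2 ^ K := one_le_pow₀ (by norm_num)
          have h2 : (1:ℝ) ≤ 17 ^ (T.a + T.b) := one_le_pow₀ (by norm_num)
          have h3 : (1:ℝ) ≤ 16 ^ (T.j + 1) := one_le_pow₀ (by norm_num)
          have hc0 : (0:ℝ) ≤ |T.c| * 2 ^ (T.a + T.b + T.gs.length) := by positivity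
          calc |T.c| * 2 ^ (T.a + T.b + T.gs.length)
              = |T.c| * 2 ^ (T.a + T.b + T.gs.length) * 1 * 1 * 1 := by ring
            _ ≤ |T.c| * 2 ^ (T.a + T.b + T.gs.length) * 2^K * 17 ^ (T.a + T.b) * 16 ^ (T.j+1) := by
                gcongr <;> positivity
            _ = |T.c| * 2 ^ (T.a + T.b + T.gs.length + K) * 17 ^ (T.a + T.b) * 16 ^ (T.j+1) := by
                rw [pow_add]; ring
  · -- 1 < Q ≤ 5/2
    have hsb : Real.sinh (t/2) ≤ 2 := le_trans (sinh_le_cosh _) (by linarith)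
    have hg1 : ∀ p : ℕ × ℕ, p.1 + p.2 = 1 → |ggf u v p.1 p.2 θ φ| ≤ 2 * 1 := by
      intro p _; simpa using abs_ggf_le hu hv p.1 p.2 θ φ
    have hprod := gProd_bound hu hv zero_le_one hg1 T.gs
    simp only [one_pow, mul_one] at hprod
    have step1 : |T.c| * Real.sinh (t/2) ^ T.a * Real.cosh (t/2) ^ T.b *
        |gProd u v T.gs θ φ| * Q ^ (-(γ + (T.j:ℝ)))
        ≤ |T.c| * 2 ^ T.a * 2 ^ T.b * 2 ^ T.gs.length * Q ^ (-(γ + (T.j:ℝ))) := by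
      have hQe : (0:ℝ) ≤ Q ^ (-(γ + (T.j:ℝ))) := (Real.rpow_pos_of_pos hQ _).le
      have b2 : Real.sinh (t/2) ^ T.a ≤ (2:ℝ) ^ T.a := pow_le_pow_left₀ hsh0 hsb _
      have b3 : Real.cosh (t/2) ^ T.b ≤ (2:ℝ) ^ T.b :=
        pow_le_pow_left₀ (Real.cosh_pos _).le (by linarith) _
      have h1 : |T.c| * Real.sinh (t/2) ^ T.a ≤ |T.c| * 2 ^ T.a :=
        mul_le_mul_of_nonneg_left b2 (abs_nonneg _)
      have h2 : |T.c| * Real.sinh (t/2) ^ T.a * Real.cosh (t/2) ^ T.b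
          ≤ |T.c| * 2 ^ T.a * 2 ^ T.b :=
        mul_le_mul h1 b3 (pow_nonneg (Real.cosh_pos _).le _) (by positivity)
      have h3 : |T.c| * Real.sinh (t/2) ^ T.a * Real.cosh (t/2) ^ T.b * |gProd u v T.gs θ φ|
          ≤ |T.c| * 2 ^ T.a * 2 ^ T.b * 2 ^ T.gs.length :=
        mul_le_mul h2 hprod (abs_nonneg _) (by positivity)
      exact mul_le_mul_of_nonneg_right h3 hQe
    have h4 : (4:ℝ) ^ ((K:ℝ)/2) = 2 ^ K := by
      have h24 : ((2:ℝ) ^ (2:ℝ)) = 4 := by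
        rw [show (2:ℝ) = ((2:ℕ):ℝ) by norm_num, Real.rpow_natCast]; norm_num
      rw [← h24, ← Real.rpow_mul (by norm_num : (0:ℝ) ≤ 2),
        show (2:ℝ)*((K:ℝ)/2) = (K:ℝ) by ring, Real.rpow_natCast]
    have hsplit : Q ^ (-(γ + (T.j:ℝ))) ≤ 2 ^ K * Q ^ (-(γ + (K:ℝ)/2)) := by
      have h1 : Q ^ (-(γ + (T.j:ℝ))) = Q ^ (-(γ + (K:ℝ)/2)) * Q ^ ((K:ℝ)/2 - (T.j:ℝ)) := by
        rw [← Real.rpow_add hQ]; ring_nf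
      have h2 : Q ^ ((K:ℝ)/2 - (T.j:ℝ)) ≤ Q ^ ((K:ℝ)/2) :=
        Real.rpow_le_rpow_of_exponent_le hQ1.le
          (by linarith [Nat.cast_nonneg (α := ℝ) T.j])
      have h3 : Q ^ ((K:ℝ)/2) ≤ (4:ℝ) ^ ((K:ℝ)/2) :=
        Real.rpow_le_rpow hQ.le (by linarith) (by positivity)
      rw [h1]
      calc Q ^ (-(γ + (K:ℝ)/2)) * Q ^ ((K:ℝ)/2 - (T.j:ℝ))
          ≤ Q ^ (-(γ + (K:ℝ)/2)) * 2 ^ K := by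
            apply mul_le_mul_of_nonneg_left _ (Real.rpow_pos_of_pos hQ _).le
            rw [← h4]; exact le_trans h2 h3
        _ = 2 ^ K * Q ^ (-(γ + (K:ℝ)/2)) := by ring
    calc |T.c| * Real.sinh (t/2) ^ T.a * Real.cosh (t/2) ^ T.b *
        |gProd u v T.gs θ φ| * Q ^ (-(γ + (T.j:ℝ)))
        ≤ |T.c| * 2 ^ T.a * 2 ^ T.b * 2 ^ T.gs.length * Q ^ (-(γ + (T.j:ℝ))) := step1
      _ ≤ |T.c| * 2 ^ T.a * 2 ^ T.b * 2 ^ T.gs.length * (2 ^ K * Q ^ (-(γ + (K:ℝ)/2))) := by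
          apply mul_le_mul_of_nonneg_left hsplit (by positivity)
      _ ≤ cB K T * Q ^ (-(γ + (K:ℝ)/2)) := by
          rw [cB]
          have h2 : (1:ℝ) ≤ 17 ^ (T.a + T.b) := one_le_pow₀ (by norm_num)
          have h3 : (1:ℝ) ≤ 16 ^ (T.j + 1) := one_le_pow₀ (by norm_num)
          have hQe : (0:ℝ) ≤ Q ^ (-(γ + (K:ℝ)/2)) := (Real.rpow_pos_of_pos hQ _).le
          have heq : |T.c| * 2 ^ T.a * 2 ^ T.b * 2 ^ T.gs.length * (2 ^ K * Q ^ (-(γ + (K:ℝ)/2)))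
              = (|T.c| * 2 ^ (T.a + T.b + T.gs.length + K)) * Q ^ (-(γ + (K:ℝ)/2)) := by
            rw [pow_add, pow_add, pow_add]; ring
          rw [heq]
          apply mul_le_mul_of_nonneg_right _ hQe
          calc |T.c| * 2 ^ (T.a + T.b + T.gs.length + K)
              = |T.c| * 2 ^ (T.a + T.b + T.gs.length + K) * 1 * 1 := by ring
            _ ≤ |T.c| * 2 ^ (T.a + T.b + T.gs.length + K) * 17 ^ (T.a + T.b) * 16 ^ (T.j+1) := by
                gcongr <;> positivity

set_option maxHeartbeats 2000000 in
lemma tval_bound₂ (γ : ℝ) {u v : ℝ} (hu : |u| ≤ 1) (hv : |v| ≤ 1) {K : ℕ} {T : Tm}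
    (hT : FinInv K T) {t : ℝ} (θ φ : ℝ) (ht : 1 < t) :
    |Tval γ u v T t θ φ| ≤ cB K T * Qf u v t θ φ ^ ((1:ℝ)/2 - γ) := by
  have ht0 : 0 < t := by linarith
  have hQ : 0 < Qf u v t θ φ := Qf_pos hu hv ht0 θ φ
  rcases hT with hc | ⟨hab, _⟩
  · rw [Tval, cB, hc]
    simp [Real.rpow_nonneg hQ.le]
  set Q := Qf u v t θ φ with hQdef
  have hq0 : 0 ≤ qK θ φ u v := qK_nonneg hu hv θ φ
  have hch : (17:ℝ)/16 ≤ Real.cosh (t/2) := cosh_gt_one ht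
  have hQ116 : (1:ℝ)/16 ≤ Q := by rw [hQdef, Qf]; linarith
  have hch17 : Real.cosh (t/2) ≤ 17 * Q := by
    have hcq : Real.cosh (t/2) = Q + 1 - qK θ φ u v := by rw [hQdef, Qf]; ring
    rw [hcq]; linarith
  have hsh0 : 0 ≤ Real.sinh (t/2) := sinh_nonneg' (by linarith)
  have hsh17 : Real.sinh (t/2) ≤ 17 * Q := le_trans (sinh_le_cosh _) hch17
  rw [abs_Tval γ u v T θ φ ht0.le hQ]
  have hg1 : ∀ p : ℕ × ℕ, p.1 + p.2 = 1 → |ggf u v p.1 p.2 θ φ| ≤ 2 * 1 := by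
    intro p _; simpa using abs_ggf_le hu hv p.1 p.2 θ φ
  have hprod := gProd_bound hu hv zero_le_one hg1 T.gs
  simp only [one_pow, mul_one] at hprod
  have step1 : |T.c| * Real.sinh (t/2) ^ T.a * Real.cosh (t/2) ^ T.b *
      |gProd u v T.gs θ φ| * Q ^ (-(γ + (T.j:ℝ)))
      ≤ |T.c| * (17*Q) ^ T.a * (17*Q) ^ T.b * 2 ^ T.gs.length * Q ^ (-(γ + (T.j:ℝ))) := by
    have hQe : (0:ℝ) ≤ Q ^ (-(γ + (T.j:ℝ))) := (Real.rpow_pos_of_pos hQ _).le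
    have b2 : Real.sinh (t/2) ^ T.a ≤ (17*Q) ^ T.a := pow_le_pow_left₀ hsh0 hsh17 _
    have b3 : Real.cosh (t/2) ^ T.b ≤ (17*Q) ^ T.b :=
      pow_le_pow_left₀ (Real.cosh_pos _).le hch17 _
    have n1 : (0:ℝ) ≤ |T.c| * (17*Q) ^ T.a := by
      apply mul_nonneg (abs_nonneg _) (pow_nonneg (by linarith) _)
    have h1 : |T.c| * Real.sinh (t/2) ^ T.a ≤ |T.c| * (17*Q) ^ T.a :=
      mul_le_mul_of_nonneg_left b2 (abs_nonneg _)
    have h2 : |T.c| * Real.sinh (t/2) ^ T.a * Real.cosh (t/2) ^ T.b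
        ≤ |T.c| * (17*Q) ^ T.a * (17*Q) ^ T.b :=
      mul_le_mul h1 b3 (pow_nonneg (Real.cosh_pos _).le _) n1
    have h3 : |T.c| * Real.sinh (t/2) ^ T.a * Real.cosh (t/2) ^ T.b * |gProd u v T.gs θ φ|
        ≤ |T.c| * (17*Q) ^ T.a * (17*Q) ^ T.b * 2 ^ T.gs.length := by
      apply mul_le_mul h2 hprod (abs_nonneg _)
      apply mul_nonneg n1 (pow_nonneg (by linarith) _)
    exact mul_le_mul_of_nonneg_right h3 hQe
  have hpows : |T.c| * (17*Q) ^ T.a * (17*Q) ^ T.b * 2 ^ T.gs.length * Q ^ (-(γ + (T.j:ℝ)))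
      = (|T.c| * 17 ^ (T.a + T.b) * 2 ^ T.gs.length) *
        (Q ^ (((T.a + T.b : ℕ):ℝ) - γ - (T.j:ℝ))) := by
    have hQn : (Q : ℝ) ^ (T.a + T.b) = Q ^ (((T.a + T.b : ℕ):ℝ)) := (Real.rpow_natCast Q _).symm
    have hcomb : Q ^ (((T.a + T.b : ℕ):ℝ)) * Q ^ (-(γ + (T.j:ℝ)))
        = Q ^ (((T.a + T.b : ℕ):ℝ) - γ - (T.j:ℝ)) := by
      rw [← Real.rpow_add hQ]; ring_nf
    rw [← hcomb, ← hQn, mul_pow, mul_pow, pow_add, pow_add]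
    ring
  have hsplitexp : Q ^ (((T.a + T.b : ℕ):ℝ) - γ - (T.j:ℝ))
      = Q ^ ((1:ℝ)/2 - γ) * Q ^ (((T.a + T.b : ℕ):ℝ) - (T.j:ℝ) - 1/2) := by
    rw [← Real.rpow_add hQ]; ring_nf
  have habK : ((T.a + T.b : ℕ):ℝ) ≤ (T.j:ℝ) := by exact_mod_cast hab
  have hbound : Q ^ (((T.a + T.b : ℕ):ℝ) - (T.j:ℝ) - 1/2) ≤ 16 ^ (T.j + 1) := by
    set x := ((T.a + T.b : ℕ):ℝ) - (T.j:ℝ) - 1/2 with hx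
    have hxneg : x ≤ 0 := by rw [hx]; linarith
    have h16 : ((16:ℝ)) ^ ((T.j:ℝ) + 1) = (16:ℝ) ^ (T.j + 1 : ℕ) := by
      rw [← Real.rpow_natCast (16:ℝ) (T.j + 1)]; push_cast; ring_nf
    rcases le_or_gt 1 Q with h1Q | h1Q
    · refine le_trans (Real.rpow_le_one_of_one_le_of_nonpos h1Q hxneg) ?_
      rw [← h16]
      exact Real.one_le_rpow (by norm_num) (by positivity)
    · have h2 : Q ^ x ≤ ((1:ℝ)/16) ^ x :=
        Real.rpow_le_rpow_of_nonpos (by norm_num) hQ116 hxneg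
      have h3 : ((1:ℝ)/16) ^ x = (16:ℝ) ^ (-x) := by
        rw [one_div, Real.inv_rpow (by norm_num), ← Real.rpow_neg (by norm_num)]
      have h4 : (16:ℝ) ^ (-x) ≤ (16:ℝ) ^ ((T.j:ℝ) + 1) := by
        apply Real.rpow_le_rpow_of_exponent_le (by norm_num)
        rw [hx]; push_cast; linarith [Nat.cast_nonneg (α := ℝ) (T.a + T.b)]
      rw [h16] at h4
      exact le_trans h2 (le_trans (le_of_eq h3) h4)
  calc |T.c| * Real.sinh (t/2) ^ T.a * Real.cosh (t/2) ^ T.b *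
      |gProd u v T.gs θ φ| * Q ^ (-(γ + (T.j:ℝ)))
      ≤ (|T.c| * 17 ^ (T.a + T.b) * 2 ^ T.gs.length) *
        (Q ^ ((1:ℝ)/2 - γ) * Q ^ (((T.a + T.b : ℕ):ℝ) - (T.j:ℝ) - 1/2)) := by
        rw [← hsplitexp, ← hpows]; exact step1
    _ ≤ (|T.c| * 17 ^ (T.a + T.b) * 2 ^ T.gs.length) *
        (Q ^ ((1:ℝ)/2 - γ) * 16 ^ (T.j + 1)) := by
        apply mul_le_mul_of_nonneg_left _ (by positivity)
        exact mul_le_mul_of_nonneg_left hbound (Real.rpow_pos_of_pos hQ _).le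
    _ ≤ cB K T * Q ^ ((1:ℝ)/2 - γ) := by
        rw [cB]
        have h1 : (1:ℝ) ≤ 2 ^ (T.a + T.b + K) := one_le_pow₀ (by norm_num)
        have hQe : (0:ℝ) ≤ Q ^ ((1:ℝ)/2 - γ) := (Real.rpow_pos_of_pos hQ _).le
        have heq : (|T.c| * 17 ^ (T.a + T.b) * 2 ^ T.gs.length) *
            (Q ^ ((1:ℝ)/2 - γ) * 16 ^ (T.j + 1))
            = (|T.c| * 2 ^ T.gs.length * 17 ^ (T.a + T.b) * 16 ^ (T.j + 1)) *
              Q ^ ((1:ℝ)/2 - γ) := by ring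
        rw [heq]
        apply mul_le_mul_of_nonneg_right _ hQe
        calc |T.c| * 2 ^ T.gs.length * 17 ^ (T.a + T.b) * 16 ^ (T.j + 1)
            = |T.c| * 2 ^ T.gs.length * 1 * 17 ^ (T.a + T.b) * 16 ^ (T.j + 1) := by ring
          _ ≤ |T.c| * 2 ^ T.gs.length * 2 ^ (T.a + T.b + K) * 17 ^ (T.a + T.b) * 16 ^ (T.j+1) := by
              gcongr <;> positivity
          _ = |T.c| * 2 ^ (T.a + T.b + T.gs.length + K) * 17 ^ (T.a + T.b) * 16 ^ (T.j+1) := by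
              rw [pow_add, pow_add, pow_add]; ring

lemma sum_bound (γ : ℝ) (K : ℕ) {u v t θ φ : ℝ} (E : ℝ) :
    ∀ L : List Tm, (∀ T ∈ L, |Tval γ u v T t θ φ| ≤ cB K T * E) →
      |Lsum γ u v L t θ φ| ≤ (L.map (cB K)).sum * E := by
  intro L
  induction L with
  | nil => intro _; simp [Lsum]
  | cons T L ih =>
      intro h
      have h1 := h T List.mem_cons_self
      have h2 := ih (fun T' hT' => h T' (List.mem_cons_of_mem T hT'))
      rw [Lsum_cons]
      calc |Tval γ u v T t θ φ + Lsum γ u v L t θ φ|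
          ≤ |Tval γ u v T t θ φ| + |Lsum γ u v L t θ φ| := abs_add_le _ _
        _ ≤ cB K T * E + (L.map (cB K)).sum * E := add_le_add h1 h2
        _ = ((T :: L).map (cB K)).sum * E := by rw [List.map_cons, List.sum_cons]; ring

lemma cBsum_nonneg (K : ℕ) (L : List Tm) : 0 ≤ (L.map (cB K)).sum := by
  apply List.sum_nonneg
  intro x hx
  rcases List.mem_map.1 hx with ⟨T, _, rfl⟩
  exact cB_nonneg K T

end Str18

theorem stmt18' (α β : ℝ) (M N : ℕ) :
    ∃ C : ℝ, 0 < C ∧ ∀ θ φ u v t : ℝ, θ ∈ Set.Ioo 0 π → φ ∈ Set.Ioo 0 π →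
      u ∈ Set.Icc (-1 : ℝ) 1 → v ∈ Set.Icc (-1 : ℝ) 1 → 0 < t →
      (t ≤ 1 →
        |PhiDerPhi α β M N t θ φ u v|
          ≤ C * (Real.cosh (t / 2) - 1 + qK θ φ u v)
              ^ (-(α + β + 2 + ((M : ℝ) + N) / 2))) ∧
      (1 < t →
        |PhiDerPhi α β M N t θ φ u v|
          ≤ C * (Real.cosh (t / 2) - 1 + qK θ φ u v) ^ (-(α + β + 3/2))) := by
  classical
  set γ := α + β + 2 with hγ
  set K := M + N with hK
  set L := Str18.Lfin γ M N with hL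
  set C := ((L.map (Str18.cB K)).sum) + 1 with hC
  have hCpos : 0 < C := by
    have := Str18.cBsum_nonneg K L
    rw [hC]; linarith
  refine ⟨C, hCpos, ?_⟩
  intro θ φ u v t hθ hφ hu hv ht
  have hu' : |u| ≤ 1 := abs_le.2 ⟨hu.1, hu.2⟩
  have hv' : |v| ≤ 1 := abs_le.2 ⟨hv.1, hv.2⟩
  have hQ : 0 < Str18.Qf u v t θ φ := Str18.Qf_pos hu' hv' ht θ φ
  have heq : PhiDerPhi α β M N t θ φ u v = Str18.Lsum γ u v L t θ φ :=
    Str18.PhiDerPhi_eq α β M N ht θ φ hu' hv'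
  have hfin := Str18.fininv_Lfin γ M N
  constructor
  · intro ht1
    have hbd := Str18.sum_bound γ K (u := u) (v := v) (t := t) (θ := θ) (φ := φ)
      (Str18.Qf u v t θ φ ^ (-(γ + (K:ℝ)/2))) L
      (fun T hT => Str18.tval_bound₁ γ hu' hv' (hfin T hT) θ φ ht ht1)
    have hexp : -(γ + (K:ℝ)/2) = -(α + β + 2 + ((M : ℝ) + N) / 2) := by
      rw [hγ, hK]; push_cast; ring
    rw [heq]
    refine le_trans hbd ?_
    rw [← hexp]
    apply mul_le_mul_of_nonneg_right _ (Real.rpow_pos_of_pos hQ _).le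
    rw [hC]; linarith
  · intro ht1
    have hbd := Str18.sum_bound γ K (u := u) (v := v) (t := t) (θ := θ) (φ := φ)
      (Str18.Qf u v t θ φ ^ ((1:ℝ)/2 - γ)) L
      (fun T hT => Str18.tval_bound₂ γ hu' hv' (hfin T hT) θ φ ht1)
    have hexp : (1:ℝ)/2 - γ = -(α + β + 3/2) := by rw [hγ]; ring
    rw [heq]
    refine le_trans hbd ?_
    rw [← hexp]
    apply mul_le_mul_of_nonneg_right _ (Real.rpow_pos_of_pos hQ _).le
    rw [hC]; linarith

theorem stmt18 (α β : ℝ) (hα : -(1/2) ≤ α) (hβ : -(1/2) ≤ β) (M N : ℕ) :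
    ∃ C : ℝ, 0 < C ∧ ∀ θ φ u v t : ℝ, θ ∈ Ioo 0 π → φ ∈ Ioo 0 π →
      u ∈ Icc (-1 : ℝ) 1 → v ∈ Icc (-1 : ℝ) 1 → 0 < t →
      (t ≤ 1 →
        |PhiDerPhi α β M N t θ φ u v|
          ≤ C * (Real.cosh (t / 2) - 1 + qK θ φ u v)
              ^ (-(α + β + 2 + ((M : ℝ) + N) / 2))) ∧
      (1 < t →
        |PhiDerPhi α β M N t θ φ u v|
          ≤ C * (Real.cosh (t / 2) - 1 + qK θ φ u v) ^ (-(α + β + 3/2))) := by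
  exact stmt18' α β M N
end
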